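/- arXiv:2010.13258 — 4 statements merged into one kernel-verified Lean document; each statement's English description precedes it below -/
import Mathlib

section
/- Fix ε̄ ∈ ℝ and ħ > 0. For every integer ℓ ≥ 1 and all polynomials P, Q ∈ ℂ[ρ₁, ρ₂, …], one has ⟨T̂_ℓ(ε̄,ħ)P, Q⟩_ħ = ⟨P, T̂_ℓ(ε̄,ħ)Q⟩_ħ; that is, each Nazarov–Sklyanin operator is symmetric with respect to the ħ-deformed Hall inner product on polynomials. -/
/-!
Nazarov–Sklyanin operators on ℂ[ρ₁, ρ₂, …] pairwise commute.
-/

open MvPolynomial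

noncomputable section

/-- The polynomial ring ℂ[ρ₁, ρ₂, …] in countably many commuting variables. -/
abbrev MvP : Type := MvPolynomial ℕ+ ℂ

/-- Creation operator ρ̂ₖ : multiplication by ρₖ. -/
def creOp (k : ℕ+) : MvP →ₗ[ℂ] MvP := LinearMap.mulLeft ℂ (X k)

/-- Annihilation operator ρ̂₋ₖ := hb·k·∂/∂ρₖ. -/
def annOp (hb : ℝ) (k : ℕ+) : MvP →ₗ[ℂ] MvP :=
  ((hb * ((k : ℕ) : ℝ) : ℝ) : ℂ) • (pderiv (R := ℂ) k).toLinearMap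

/-- The step operator for a step of heights j → j': a creation operator ρ̂_{j'−j} if j < j',
an annihilation operator if j' < j, and ε̄·j·Id for a slide (j = j', using ρ̂₀ = 0). -/
def stepOp (ε hb : ℝ) (j j' : ℕ) : MvP →ₗ[ℂ] MvP :=
  if hlt : j < j' then creOp ⟨j' - j, by omega⟩
  else if hgt : j' < j then annOp hb ⟨j - j', by omega⟩
  else ((ε * (j : ℝ) : ℝ) : ℂ) • (LinearMap.id : MvP →ₗ[ℂ] MvP)

/-- The Nazarov–Sklyanin path operator attached to a list of heights j₀, j₁, …, j_ℓ:
the composition A₁ ∘ ⋯ ∘ A_ℓ where A_i is the step operator of j_{i-1} → j_i. -/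
def pathOp (ε hb : ℝ) : List ℕ → (MvP →ₗ[ℂ] MvP)
  | j :: j' :: rest => stepOp ε hb j j' ∘ₗ pathOp ε hb (j' :: rest)
  | _ => LinearMap.id

/-- The ℓ-th Nazarov–Sklyanin operator: `T̂_ℓ(ε̄,hb) P = Σ_{(j₁,…,j_{ℓ−1}) ∈ ℕ^{ℓ−1}}
Ŝ(j₁,…,j_{ℓ−1} | ε̄, hb) P`, with boundary heights j₀ = j_ℓ = 0.  (The sum has finitely
many nonzero terms, so the `finsum` below is the actual sum.) -/
def NSop (ε hb : ℝ) (ℓ : ℕ) (P : MvP) : MvP :=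
  ∑ᶠ t : Fin (ℓ - 1) → ℕ, pathOp ε hb ((0 : ℕ) :: (List.ofFn t ++ [0])) P

end

noncomputable section

/-- The ħ-deformed Hall inner product on ℂ[ρ₁,ρ₂,…], conjugate-linear in the first argument,
for which the monomials ρ^d = ∏ₖ ρₖ^{dₖ} are pairwise orthogonal with
⟨ρ^d, ρ^d⟩ = ∏ₖ (ħk)^{dₖ}·dₖ!. -/
def hallInner (hb : ℝ) (P Q : MvP) : ℂ :=
  ∑ᶠ d : ℕ+ →₀ ℕ,
    (starRingEnd ℂ) (coeff d P) * coeff d Q *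
      (((∏ k ∈ d.support, (hb * ((k : ℕ) : ℝ)) ^ (d k) * ((d k).factorial : ℝ)) : ℝ) : ℂ)

end


noncomputable section NSaux

def wt (hb : ℝ) (d : ℕ+ →₀ ℕ) : ℝ :=
  ∏ k ∈ d.support, (hb * ((k : ℕ) : ℝ)) ^ (d k) * ((d k).factorial : ℝ)

lemma hallInner_def (hb : ℝ) (P Q : MvP) :
    hallInner hb P Q = ∑ᶠ d, (starRingEnd ℂ) (coeff d P) * coeff d Q * ((wt hb d : ℝ) : ℂ) := rfl

lemma hall_support (hb : ℝ) (P Q : MvP) :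
    (Function.support fun d => (starRingEnd ℂ) (coeff d P) * coeff d Q * ((wt hb d : ℝ) : ℂ))
      ⊆ ↑P.support := by
  intro d hd
  simp only [Function.mem_support] at hd
  simp only [Finset.coe_sort_coe, Finset.mem_coe, mem_support_iff]
  intro h
  simp [h] at hd

lemma hall_eq_sum (hb : ℝ) (P Q : MvP) {s : Finset (ℕ+ →₀ ℕ)} (h : P.support ⊆ s) :
    hallInner hb P Q = ∑ d ∈ s, (starRingEnd ℂ) (coeff d P) * coeff d Q * ((wt hb d : ℝ) : ℂ) := by
  rw [hallInner_def]
  exact finsum_eq_sum_of_support_subset _ (le_trans (hall_support hb P Q) (by exact_mod_cast h))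

lemma hall_add_left (hb : ℝ) (P₁ P₂ Q : MvP) :
    hallInner hb (P₁ + P₂) Q = hallInner hb P₁ Q + hallInner hb P₂ Q := by
  have hs : (P₁ + P₂).support ⊆ P₁.support ∪ P₂.support := support_add
  rw [hall_eq_sum hb (P₁+P₂) Q hs, hall_eq_sum hb P₁ Q (Finset.subset_union_left),
    hall_eq_sum hb P₂ Q (Finset.subset_union_right), ← Finset.sum_add_distrib]
  refine Finset.sum_congr rfl fun d _ => ?_
  rw [coeff_add, map_add]
  ring

lemma hall_add_right (hb : ℝ) (P Q₁ Q₂ : MvP) :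
    hallInner hb P (Q₁ + Q₂) = hallInner hb P Q₁ + hallInner hb P Q₂ := by
  rw [hall_eq_sum hb P (Q₁ + Q₂) (subset_refl _), hall_eq_sum hb P Q₁ (subset_refl _),
    hall_eq_sum hb P Q₂ (subset_refl _), ← Finset.sum_add_distrib]
  refine Finset.sum_congr rfl fun d _ => ?_
  rw [coeff_add]
  ring

lemma hall_smul_left (hb : ℝ) (c : ℂ) (P Q : MvP) :
    hallInner hb (c • P) Q = (starRingEnd ℂ) c * hallInner hb P Q := by
  have hs : (c • P).support ⊆ P.support := support_smul
  rw [hall_eq_sum hb (c • P) Q hs, hall_eq_sum hb P Q (subset_refl _), Finset.mul_sum]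
  refine Finset.sum_congr rfl fun d _ => ?_
  rw [coeff_smul, smul_eq_mul, map_mul]
  ring

lemma hall_smul_right (hb : ℝ) (c : ℂ) (P Q : MvP) :
    hallInner hb P (c • Q) = c * hallInner hb P Q := by
  rw [hall_eq_sum hb P (c • Q) (subset_refl _), hall_eq_sum hb P Q (subset_refl _), Finset.mul_sum]
  refine Finset.sum_congr rfl fun d _ => ?_
  rw [coeff_smul, smul_eq_mul]
  ring

lemma hall_conj (hb : ℝ) (P Q : MvP) :
    hallInner hb Q P = (starRingEnd ℂ) (hallInner hb P Q) := by
  rw [hall_eq_sum hb P Q (Finset.subset_union_left (s₁ := P.support) (s₂ := Q.support)), map_sum,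
    hall_eq_sum hb Q P (Finset.subset_union_right (s₁ := P.support) (s₂ := Q.support))]
  refine Finset.sum_congr rfl fun d _ => ?_
  rw [map_mul, map_mul, Complex.conj_ofReal, Complex.conj_conj]
  ring

lemma support_add_single (d : ℕ+ →₀ ℕ) (k : ℕ+) :
    (d + Finsupp.single k 1).support = insert k d.support := by
  ext j
  by_cases hj : j = k
  · subst hj; simp [Finsupp.mem_support_iff]
  · simp [Finsupp.mem_support_iff, Finsupp.single_apply, Ne.symm hj, hj]

lemma wt_add_single (hb : ℝ) (d : ℕ+ →₀ ℕ) (k : ℕ+) :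
    wt hb (d + Finsupp.single k 1)
      = (hb * ((k : ℕ) : ℝ)) * ((d k : ℕ) + 1) * wt hb d := by
  set e : ℕ+ →₀ ℕ := d + Finsupp.single k 1 with he
  have hek : e k = d k + 1 := by simp [he]
  have hej : ∀ j : ℕ+, j ≠ k → e j = d j := by
    intro j hj; simp [he, Finsupp.single_apply, Ne.symm hj]
  set f : ℕ+ → ℕ → ℝ := fun j n => (hb * ((j : ℕ) : ℝ)) ^ n * (n.factorial : ℝ) with hf
  have hwd : wt hb d = ∏ j ∈ insert k d.support, f j (d j) := by
    rw [wt]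
    show (∏ j ∈ d.support, f j (d j)) = _
    refine (Finset.prod_subset (f := fun j => f j (d j)) (Finset.subset_insert _ _)
      fun j _ hjn => ?_)
    have : d j = 0 := by rwa [← Finsupp.notMem_support_iff]
    simp [hf, this]
  have hwd' : wt hb e = ∏ j ∈ insert k d.support, f j (e j) := by
    rw [wt, he, support_add_single]
  rw [hwd', hwd, ← Finset.mul_prod_erase _ (fun j => f j (e j)) (Finset.mem_insert_self k _),
    ← Finset.mul_prod_erase _ (fun j => f j (d j)) (Finset.mem_insert_self k _), ← mul_assoc]
  have hprod : ∏ j ∈ (insert k d.support).erase k, f j (e j)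
      = ∏ j ∈ (insert k d.support).erase k, f j (d j) := by
    refine Finset.prod_congr rfl fun j hj => ?_
    rw [hej j (Finset.mem_erase.1 hj).1]
  rw [hprod]
  congr 1
  rw [hek, hf]
  simp only
  rw [pow_succ, Nat.factorial_succ]
  push_cast
  ring
lemma coeff_pderiv' (k : ℕ+) (m : ℕ+ →₀ ℕ) (f : MvP) :
    coeff m (pderiv k f) = (m k + 1 : ℕ) * coeff (m + Finsupp.single k 1) f := by
  induction f using MvPolynomial.induction_on' with
  | monomial s a =>
    rw [pderiv_monomial, coeff_monomial, coeff_monomial]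
    by_cases h : s = m + Finsupp.single k 1
    · subst h
      have h2 : m + Finsupp.single k 1 - Finsupp.single k 1 = m := by
        ext j; simp [Finsupp.single_apply]
      rw [if_pos h2]
      simp [Finsupp.single_apply, mul_comm]
    · rw [if_neg h]
      by_cases h2 : s - Finsupp.single k 1 = m
      · by_cases h3 : s k = 0
        · simp [h3]
        · exfalso; apply h; ext j
          have := DFunLike.congr_fun h2 j
          rw [Finsupp.tsub_apply] at this
          by_cases hj : j = k
          · subst hj
            simp at this ⊢
            omega
          · simp [Finsupp.single_apply, Ne.symm hj] at this ⊢
            omega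
      · simp [h2]
  | add p q hp hq => simp [hp, hq, mul_add]

lemma hall_cre (hb : ℝ) (k : ℕ+) (P Q : MvP) :
    hallInner hb (X k * P) Q
      = hallInner hb P (((hb * ((k : ℕ) : ℝ) : ℝ) : ℂ) • pderiv k Q) := by
  classical
  -- LHS as sum over image of P.support
  have hsub : (X k * P : MvP).support ⊆ P.support.image (· + Finsupp.single k 1) := by
    intro d hd
    rw [mem_support_iff, coeff_X_mul'] at hd
    split_ifs at hd with hk
    · refine Finset.mem_image.2 ⟨d - Finsupp.single k 1, mem_support_iff.2 hd, ?_⟩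
      ext j
      rw [Finsupp.mem_support_iff] at hk
      by_cases hj : j = k
      · subst hj; simp [Finsupp.single_apply]; omega
      · simp [Finsupp.single_apply, Ne.symm hj, hj]
    · exact absurd rfl hd
  rw [hall_eq_sum hb _ Q hsub, hall_eq_sum hb P _ (subset_refl _)]
  rw [Finset.sum_image (fun a _ b _ h => by simpa using h)]
  refine Finset.sum_congr rfl fun d _ => ?_
  have h1 : coeff (d + Finsupp.single k 1) (X k * P) = coeff d P := by
    rw [add_comm, coeff_X_mul]
  rw [h1, coeff_smul, coeff_pderiv', wt_add_single, smul_eq_mul]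
  push_cast
  ring

variable (ε hb : ℝ)

lemma pathOp_cons (j : ℕ) (l : List ℕ) (hl : l ≠ []) :
    pathOp ε hb (j :: l) = stepOp ε hb j (l.headI) ∘ₗ pathOp ε hb l := by
  match l, hl with
  | j' :: rest, _ => rfl

lemma pathOp_append_pair : ∀ (l : List ℕ) (b a : ℕ),
    pathOp ε hb (l ++ [b, a]) = pathOp ε hb (l ++ [b]) ∘ₗ stepOp ε hb b a := by
  intro l
  induction l with
  | nil =>
    intro b a
    simp only [List.nil_append]
    show stepOp ε hb b a ∘ₗ LinearMap.id = LinearMap.id ∘ₗ stepOp ε hb b a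
    simp
  | cons c l ih =>
    intro b a
    cases l with
    | nil =>
      show stepOp ε hb c b ∘ₗ pathOp ε hb [b, a]
        = (stepOp ε hb c b ∘ₗ pathOp ε hb [b]) ∘ₗ stepOp ε hb b a
      show stepOp ε hb c b ∘ₗ (stepOp ε hb b a ∘ₗ LinearMap.id)
        = (stepOp ε hb c b ∘ₗ LinearMap.id) ∘ₗ stepOp ε hb b a
      simp
    | cons d l' =>
      show stepOp ε hb c d ∘ₗ pathOp ε hb (d :: l' ++ [b, a])
        = (stepOp ε hb c d ∘ₗ pathOp ε hb (d :: l' ++ [b])) ∘ₗ stepOp ε hb b a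
      rw [ih, LinearMap.comp_assoc]

lemma pathOp_zero_of_zero (j : ℕ) (l : List ℕ) (P : MvP) (h : pathOp ε hb l P = 0) :
    pathOp ε hb (j :: l) P = 0 := by
  cases l with
  | nil =>
    show P = 0
    exact h
  | cons j' rest =>
    show stepOp ε hb j j' (pathOp ε hb (j' :: rest) P) = 0
    rw [h, map_zero]

lemma step_support_finite (hhb : 0 < hb) (h : ℕ) (V : MvP) :
    {a : ℕ | stepOp ε hb a h V ≠ 0}.Finite := by
  refine Set.Finite.subset (Set.Finite.union (Set.finite_Iic h)
    (Set.Finite.image (fun k : ℕ+ => h + (k : ℕ)) V.vars.finite_toSet)) ?_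
  intro a ha
  simp only [Set.mem_setOf_eq] at ha
  rcases le_or_gt a h with hle | hgt
  · exact Or.inl hle
  · refine Or.inr ?_
    have hne : stepOp ε hb a h = annOp hb ⟨a - h, by omega⟩ := by
      rw [stepOp, dif_neg (by omega), dif_pos hgt]
    rw [hne] at ha
    have hp : pderiv (R := ℂ) (⟨a - h, by omega⟩ : ℕ+) V ≠ 0 := by
      intro h0
      apply ha
      show ((hb * (((⟨a - h, by omega⟩ : ℕ+) : ℕ) : ℝ) : ℝ) : ℂ) • pderiv _ V = 0
      exact smul_eq_zero_of_right _ h0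
    have hv : (⟨a - h, by omega⟩ : ℕ+) ∈ V.vars := by
      by_contra hnv
      exact hp (pderiv_eq_zero_of_notMem_vars hnv)
    exact ⟨⟨a - h, by omega⟩, hv, by simp; omega⟩

lemma path_fin_list (hhb : 0 < hb) : ∀ (n : ℕ) (P : MvP),
    {l : List ℕ | l.length = n ∧ pathOp ε hb (l ++ [0]) P ≠ 0}.Finite := by
  intro n
  induction n with
  | zero =>
    intro P
    refine Set.Finite.subset (Set.finite_singleton []) ?_
    intro l hl
    simp only [Set.mem_setOf_eq, List.length_eq_zero_iff] at hl
    exact hl.1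
  | succ n ih =>
    intro P
    have hS := ih P
    set S := {l : List ℕ | l.length = n ∧ pathOp ε hb (l ++ [0]) P ≠ 0} with hSdef
    set U := ⋃ l' ∈ S, (fun a : ℕ => (a, l')) ''
      {a : ℕ | stepOp ε hb a ((l' ++ [0]).headI) (pathOp ε hb (l' ++ [0]) P) ≠ 0} with hU
    have hUfin : U.Finite :=
      Set.Finite.biUnion hS fun l' _ => Set.Finite.image _ (step_support_finite ε hb hhb _ _)
    refine Set.Finite.subset (Set.Finite.image (fun p : ℕ × List ℕ => p.1 :: p.2) hUfin) ?_
    rintro l ⟨hlen, hne⟩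
    cases l with
    | nil => simp at hlen
    | cons a l' =>
      have hlen' : l'.length = n := by simpa using hlen
      have hcons : (a :: l') ++ [0] = a :: (l' ++ [0]) := rfl
      rw [hcons, pathOp_cons ε hb a (l' ++ [0]) (by simp)] at hne
      have hinner : pathOp ε hb (l' ++ [0]) P ≠ 0 := by
        intro h0
        apply hne
        show (stepOp ε hb a ((l' ++ [0]).headI) ∘ₗ pathOp ε hb (l' ++ [0])) P = 0
        rw [LinearMap.comp_apply, h0, map_zero]
      refine ⟨(a, l'), ?_, rfl⟩
      refine Set.mem_biUnion (show l' ∈ S from ⟨hlen', hinner⟩) ?_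
      exact ⟨a, hne, rfl⟩

lemma path_fin_tuple (hhb : 0 < hb) (n : ℕ) (P : MvP) :
    (Function.support fun t : Fin n → ℕ =>
      pathOp ε hb ((0 : ℕ) :: (List.ofFn t ++ [0])) P).Finite := by
  refine Set.Finite.subset (Set.Finite.preimage
    (Set.injOn_of_injective List.ofFn_injective)
    (path_fin_list ε hb hhb n P)) ?_
  intro t ht
  simp only [Function.mem_support] at ht
  refine ⟨List.length_ofFn, fun h0 => ht ?_⟩
  exact pathOp_zero_of_zero ε hb 0 (List.ofFn t ++ [0]) P h0

lemma reverse_ofFn {α : Type*} {n : ℕ} (t : Fin n → α) :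
    (List.ofFn t).reverse = List.ofFn (t ∘ Fin.rev) := by
  apply List.ext_getElem
  · simp
  · intro i h1 h2
    simp only [List.getElem_reverse, List.getElem_ofFn, Function.comp_apply]
    congr 1
    simp only [List.length_ofFn] at h1 h2 ⊢
    ext
    simp [Fin.rev]
    omega

lemma hall_zero_left (hb : ℝ) (Q : MvP) : hallInner hb 0 Q = 0 := by
  rw [hall_eq_sum hb 0 Q (s := ∅) (by simp)]
  simp

lemma hall_zero_right (hb : ℝ) (P : MvP) : hallInner hb P 0 = 0 := by
  rw [hall_eq_sum hb P 0 (subset_refl _)]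
  simp

lemma hall_ann (hb : ℝ) (k : ℕ+) (P Q : MvP) :
    hallInner hb (((hb * ((k : ℕ) : ℝ) : ℝ) : ℂ) • pderiv k P) Q
      = hallInner hb P (X k * Q) := by
  rw [hall_conj hb Q (((hb * ((k : ℕ) : ℝ) : ℝ) : ℂ) • pderiv k P),
    ← hall_cre hb k Q P, ← hall_conj hb (X k * Q) P]

lemma hall_step (j j' : ℕ) (P Q : MvP) :
    hallInner hb (stepOp ε hb j j' P) Q = hallInner hb P (stepOp ε hb j' j Q) := by
  rcases lt_trichotomy j j' with h | h | h
  · rw [stepOp, dif_pos h, stepOp, dif_neg (by omega), dif_pos h]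
    have h1 : creOp ⟨j' - j, by omega⟩ P = X (σ := ℕ+) (R := ℂ) (⟨j' - j, by omega⟩ : ℕ+) * P := rfl
    have h2 : annOp hb ⟨j' - j, by omega⟩ Q
        = ((hb * (((⟨j' - j, by omega⟩ : ℕ+) : ℕ) : ℝ) : ℝ) : ℂ)
            • pderiv (⟨j' - j, by omega⟩ : ℕ+) Q := rfl
    rw [h1, h2]
    exact hall_cre hb _ P Q
  · subst h
    rw [stepOp, dif_neg (by omega), dif_neg (by omega)]
    show hallInner hb (((ε * (j : ℝ) : ℝ) : ℂ) • P) Q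
      = hallInner hb P (((ε * (j : ℝ) : ℝ) : ℂ) • Q)
    rw [hall_smul_left, hall_smul_right, Complex.conj_ofReal]
  · rw [stepOp, dif_neg (by omega), dif_pos h, stepOp, dif_pos h]
    have h1 : annOp hb ⟨j - j', by omega⟩ P
        = ((hb * (((⟨j - j', by omega⟩ : ℕ+) : ℕ) : ℝ) : ℝ) : ℂ)
            • pderiv (⟨j - j', by omega⟩ : ℕ+) P := rfl
    have h2 : creOp ⟨j - j', by omega⟩ Q = X (σ := ℕ+) (R := ℂ) (⟨j - j', by omega⟩ : ℕ+) * Q := rfl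
    rw [h1, h2]
    exact hall_ann hb _ P Q

lemma hall_path (l : List ℕ) : ∀ (j : ℕ) (P Q : MvP),
    hallInner hb (pathOp ε hb (j :: l) P) Q
      = hallInner hb P (pathOp ε hb ((j :: l).reverse) Q) := by
  induction l with
  | nil =>
    intro j P Q
    rfl
  | cons j' rest ih =>
    intro j P Q
    have hstep : pathOp ε hb (j :: j' :: rest) P
        = stepOp ε hb j j' (pathOp ε hb (j' :: rest) P) := rfl
    rw [hstep, hall_step ε hb j j' _ Q, ih j' P (stepOp ε hb j' j Q)]
    congr 1
    have hrev : (j :: j' :: rest).reverse = (rest.reverse ++ [j']) ++ [j, ] := by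
      simp
    have hrev2 : (j' :: rest).reverse = rest.reverse ++ [j'] := by simp
    rw [hrev, hrev2]
    have := pathOp_append_pair ε hb rest.reverse j' j
    have happ : rest.reverse ++ [j'] ++ [j] = rest.reverse ++ [j', j] := by simp
    rw [happ, this]
    rfl

/-- hallInner as an additive hom in the first argument. -/
def hallL (hb : ℝ) (Q : MvP) : MvP →+ ℂ where
  toFun P := hallInner hb P Q
  map_zero' := hall_zero_left hb Q
  map_add' P₁ P₂ := hall_add_left hb P₁ P₂ Q

/-- hallInner as an additive hom in the second argument. -/
def hallR (hb : ℝ) (P : MvP) : MvP →+ ℂ where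
  toFun Q := hallInner hb P Q
  map_zero' := hall_zero_right hb P
  map_add' Q₁ Q₂ := hall_add_right hb P Q₁ Q₂

end NSaux

/-- For ε̄ ∈ ℝ, ħ > 0, every ℓ ≥ 1 and all polynomials P, Q:
⟨T̂_ℓ(ε̄,ħ)P, Q⟩_ħ = ⟨P, T̂_ℓ(ε̄,ħ)Q⟩_ħ, i.e. each Nazarov–Sklyanin operator is symmetric
for the ħ-deformed Hall inner product. -/
theorem NS_operator_symmetric (ε hb : ℝ) (hhb : 0 < hb) (ℓ : ℕ) (hℓ : 1 ≤ ℓ)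
    (P Q : MvP) :
    hallInner hb (NSop ε hb ℓ P) Q = hallInner hb P (NSop ε hb ℓ Q) := by
  classical
  have hfinP := path_fin_tuple ε hb hhb (ℓ - 1) P
  have hfinQ := path_fin_tuple ε hb hhb (ℓ - 1) Q
  show hallL hb Q (NSop ε hb ℓ P) = hallR hb P (NSop ε hb ℓ Q)
  rw [NSop, NSop, AddMonoidHom.map_finsum _ hfinP, AddMonoidHom.map_finsum _ hfinQ]
  have step1 : ∀ t : Fin (ℓ - 1) → ℕ,
      hallL hb Q (pathOp ε hb ((0 : ℕ) :: (List.ofFn t ++ [0])) P)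
        = hallR hb P (pathOp ε hb ((0 : ℕ) :: (List.ofFn (t ∘ Fin.rev) ++ [0])) Q) := by
    intro t
    have hrev : ((0 : ℕ) :: (List.ofFn t ++ [0])).reverse
        = (0 : ℕ) :: (List.ofFn (t ∘ Fin.rev) ++ [0]) := by
      simp [reverse_ofFn]
    have := hall_path ε hb (List.ofFn t ++ [0]) 0 P Q
    rw [hrev] at this
    exact this
  calc (∑ᶠ t : Fin (ℓ - 1) → ℕ, hallL hb Q (pathOp ε hb ((0 : ℕ) :: (List.ofFn t ++ [0])) P))
      = ∑ᶠ t : Fin (ℓ - 1) → ℕ,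
          hallR hb P (pathOp ε hb ((0 : ℕ) :: (List.ofFn (t ∘ Fin.rev) ++ [0])) Q) :=
        finsum_congr step1
    _ = ∑ᶠ t : Fin (ℓ - 1) → ℕ,
          hallR hb P (pathOp ε hb ((0 : ℕ) :: (List.ofFn t ++ [0])) Q) := by
        have hinv : Function.Involutive (fun t : Fin (ℓ - 1) → ℕ => t ∘ Fin.rev) := by
          intro t; funext i; simp [Fin.rev_rev]
        exact finsum_comp
          (g := fun t : Fin (ℓ - 1) → ℕ =>
            hallR hb P (pathOp ε hb ((0 : ℕ) :: (List.ofFn t ++ [0])) Q))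
          (fun t : Fin (ℓ - 1) → ℕ => t ∘ Fin.rev) hinv.bijective
end

section
/- Fix ε̄ ∈ ℝ, ħ > 0, an integer n ≥ 1, and sliding paths γ₁, …, γₙ of lengths ℓ₁, …, ℓₙ. Then, as an identity of linear operators on ℂ[ρ₁, ρ₂, …]: Ŝ(γ₁ | ε̄, ħ) ∘ Ŝ(γ₂ | ε̄, ħ) ∘ ⋯ ∘ Ŝ(γₙ | ε̄, ħ) = Σ_P [ ε̄^m · (∏_{slides e of γ₁,…,γₙ} height(e)) · ħ^{|P|} · (∏_{p ∈ P} size(p)) · (∏_{jumps of degree k>0 unpaired by P} ρ̂_k) ∘ (∏_{jumps of degree −k<0 unpaired by P} ρ̂_{−k}) ], where m is the total number of slides of γ₁, …, γₙ, and P runs over all sets of pairwise disjoint pairings of the steps of (γ₁, …, γₙ): a pairing matches a jump of degree −k at position (a, i) with a jump of degree +k at position (a′, i′) for the same k ≥ 1, with (a, i) lexicographically before (a′, i′), and its size is k. -/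
/-!
Nazarov–Sklyanin operators on ℂ[ρ₁, ρ₂, …] pairwise commute.
-/

open MvPolynomial

open scoped Classical

noncomputable section

/-- A step of an n-tuple of sliding paths with lengths ℓv: a site a together with a step
position in site a. -/
abbrev MStep (n : ℕ) (ℓv : Fin n → ℕ) : Type := Σ a : Fin n, Fin (ℓv a)

/-- The degree of a step. -/
def mdeg {n : ℕ} {ℓv : Fin n → ℕ} (h : ∀ a : Fin n, Fin (ℓv a + 1) → ℕ)
    (s : MStep n ℓv) : ℤ :=
  ((h s.1 s.2.succ : ℕ) : ℤ) - ((h s.1 s.2.castSucc : ℕ) : ℤ)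

/-- Lexicographic order on steps: first by site, then by position. -/
def mstepLt {n : ℕ} {ℓv : Fin n → ℕ} (s t : MStep n ℓv) : Prop :=
  s.1 < t.1 ∨ (s.1 = t.1 ∧ (s.2 : ℕ) < (t.2 : ℕ))

/-- A pairing: a jump of degree −k lexicographically before a jump of degree +k. -/
def IsMPairing {n : ℕ} {ℓv : Fin n → ℕ} (h : ∀ a : Fin n, Fin (ℓv a + 1) → ℕ)
    (p : MStep n ℓv × MStep n ℓv) : Prop :=
  mstepLt p.1 p.2 ∧ mdeg h p.1 < 0 ∧ mdeg h p.2 = -(mdeg h p.1)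

/-- A valid set of pairings: each element is a pairing and the pairings are pairwise
disjoint as sets of steps. -/
def ValidMPairingSet {n : ℕ} {ℓv : Fin n → ℕ} (h : ∀ a : Fin n, Fin (ℓv a + 1) → ℕ)
    (P : Finset (MStep n ℓv × MStep n ℓv)) : Prop :=
  (∀ p ∈ P, IsMPairing h p) ∧
    ∀ p ∈ P, ∀ q ∈ P, p ≠ q → p.1 ≠ q.1 ∧ p.1 ≠ q.2 ∧ p.2 ≠ q.1 ∧ p.2 ≠ q.2

/-- A step is unpaired by P if it occurs in no pairing of P. -/
def MUnpaired {n : ℕ} {ℓv : Fin n → ℕ} (P : Finset (MStep n ℓv × MStep n ℓv))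
    (s : MStep n ℓv) : Prop :=
  ∀ p ∈ P, p.1 ≠ s ∧ p.2 ≠ s

/-- The canonical (lexicographic) enumeration of all steps. -/
def mstepList (n : ℕ) (ℓv : Fin n → ℕ) : List (MStep n ℓv) :=
  (List.finRange n).flatMap fun a => (List.finRange (ℓv a)).map fun i => ⟨a, i⟩

/-- The product of creation operators ρ̂ₖ over the jumps of positive degree k unpaired by P. -/
def creMPart {n : ℕ} {ℓv : Fin n → ℕ} (h : ∀ a : Fin n, Fin (ℓv a + 1) → ℕ)
    (P : Finset (MStep n ℓv × MStep n ℓv)) : MvP →ₗ[ℂ] MvP :=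
  LinearMap.mulLeft ℂ
    (∏ s ∈ Finset.univ.filter (fun s : MStep n ℓv => 0 < mdeg h s ∧ MUnpaired P s),
      X (mdeg h s).natAbs.toPNat')

/-- The product of annihilation operators ρ̂₋ₖ over the jumps of negative degree −k unpaired
by P (these operators pairwise commute; the composition is taken in the canonical order of
the steps). -/
def annMPart (hb : ℝ) {n : ℕ} {ℓv : Fin n → ℕ} (h : ∀ a : Fin n, Fin (ℓv a + 1) → ℕ)
    (P : Finset (MStep n ℓv × MStep n ℓv)) : MvP →ₗ[ℂ] MvP :=
  (((mstepList n ℓv).filter fun s => decide (mdeg h s < 0 ∧ MUnpaired P s)).map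
      fun s => annOp hb (mdeg h s).natAbs.toPNat').foldr (· ∘ₗ ·) LinearMap.id

end


namespace NSAux
set_option linter.unusedSectionVars false
noncomputable section
variable {ι : Type*} [Fintype ι] [DecidableEq ι]

abbrev Op := MvP →ₗ[ℂ] MvP

/-- composition helpers -/
lemma comp_sum {α : Type*} (f : Op) (s : Finset α) (g : α → Op) :
    f ∘ₗ (∑ i ∈ s, g i) = ∑ i ∈ s, f ∘ₗ g i := by
  ext v; simp [LinearMap.sum_apply]

lemma comp_smul' (f : Op) (a : ℂ) (g : Op) : f ∘ₗ (a • g) = a • (f ∘ₗ g) := by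
  ext v; simp

lemma foldr_comp_eq (l : List Op) (A : Op) :
    l.foldr (· ∘ₗ ·) A = (l.foldr (· ∘ₗ ·) LinearMap.id) ∘ₗ A := by
  induction l with
  | nil => simp
  | cons x t ih => simp [List.foldr_cons, ih, LinearMap.comp_assoc]

lemma foldr_comp_append (l₁ l₂ : List Op) :
    (l₁ ++ l₂).foldr (· ∘ₗ ·) LinearMap.id =
      (l₁.foldr (· ∘ₗ ·) LinearMap.id) ∘ₗ (l₂.foldr (· ∘ₗ ·) LinearMap.id) := by
  rw [List.foldr_append, foldr_comp_eq]

lemma sum_comp' {α : Type*} (s : Finset α) (g : α → Op) (f : Op) :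
    (∑ i ∈ s, g i) ∘ₗ f = ∑ i ∈ s, g i ∘ₗ f := by
  ext v; simp [LinearMap.sum_apply]

lemma foldr_comp_flatMap {α : Type*} (l : List α) (f : α → List Op) :
    ((l.flatMap f).foldr (· ∘ₗ ·) LinearMap.id) =
      (l.map (fun a => (f a).foldr (· ∘ₗ ·) LinearMap.id)).foldr (· ∘ₗ ·) LinearMap.id := by
  induction l with
  | nil => rfl
  | cons a t ih => rw [List.flatMap_cons, foldr_comp_append, ih, List.map_cons, List.foldr_cons]

lemma mulLeft_sum {α : Type*} (s : Finset α) (M : α → MvP) :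
    LinearMap.mulLeft ℂ (∑ y ∈ s, M y) = ∑ y ∈ s, LinearMap.mulLeft ℂ (M y) := by
  ext v; simp [Finset.sum_mul]

lemma ann_comp_mulLeft (hb : ℝ) (k : ℕ+) (M : MvP) :
    annOp hb k ∘ₗ LinearMap.mulLeft ℂ M =
      ((hb * ((k : ℕ) : ℝ) : ℝ) : ℂ) • LinearMap.mulLeft ℂ (pderiv (R := ℂ) k M)
        + LinearMap.mulLeft ℂ M ∘ₗ annOp hb k := by
  apply LinearMap.ext; intro f
  simp only [LinearMap.comp_apply, LinearMap.mulLeft_apply, annOp, LinearMap.smul_apply,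
    LinearMap.add_apply]
  show _ • (pderiv (R := ℂ) k) (M * f) = _
  rw [pderiv_mul, smul_add, mul_smul_comm]
  rfl


lemma pderiv_list_prod (k : ℕ+) (g : ι → ℕ+) :
    ∀ (l : List ι), l.Nodup →
      pderiv (R := ℂ) k ((l.map (fun s => (X (g s) : MvP))).prod) =
        ((l.filter (fun s => decide (g s = k))).map
          (fun y => ((l.erase y).map (fun s => (X (g s) : MvP))).prod)).sum := by
  intro l
  induction l with
  | nil => simp [pderiv_one]
  | cons a t ih =>
    intro hnd
    have ha : a ∉ t := (List.nodup_cons.mp hnd).1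
    have hnt : t.Nodup := (List.nodup_cons.mp hnd).2
    rw [List.map_cons, List.prod_cons, pderiv_mul, ih hnt]
    by_cases hak : g a = k
    · rw [List.filter_cons_of_pos (by simpa using hak), List.map_cons, List.sum_cons]
      rw [hak, pderiv_X_self, one_mul, List.erase_cons_head]
      rw [← hak, ← List.sum_map_mul_left]
      congr 1
      refine congrArg (fun l : List MvP => l.sum) (List.map_congr_left ?_)
      intro y hy
      have hyt : y ∈ t := List.mem_of_mem_filter hy
      rw [List.erase_cons_tail (by simp only [beq_iff_eq]; rintro rfl; exact ha hyt),
        List.map_cons, List.prod_cons]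
    · rw [List.filter_cons_of_neg (by simpa using hak)]
      rw [pderiv_X_of_ne (by simpa [eq_comm] using hak), zero_mul, zero_add]
      rw [← List.sum_map_mul_left]
      refine congrArg (fun l : List MvP => l.sum) (List.map_congr_left ?_)
      intro y hy
      have hyt : y ∈ t := List.mem_of_mem_filter hy
      rw [List.erase_cons_tail (by simp only [beq_iff_eq]; rintro rfl; exact ha hyt),
        List.map_cons, List.prod_cons]

def unp (P : Finset (ι × ι)) (s : ι) : Prop := ∀ p ∈ P, p.1 ≠ s ∧ p.2 ≠ s

def vOn (r : ι → ι → Prop) (d : ι → ℤ) (l : List ι) (P : Finset (ι × ι)) : Prop :=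
  (∀ p ∈ P, p.1 ∈ l ∧ p.2 ∈ l ∧ r p.1 p.2 ∧ d p.1 < 0 ∧ d p.2 = -(d p.1)) ∧
    ∀ p ∈ P, ∀ q ∈ P, p ≠ q → p.1 ≠ q.1 ∧ p.1 ≠ q.2 ∧ p.2 ≠ q.1 ∧ p.2 ≠ q.2

def vIdx (d : ι → ℤ) (s : ι) : ℕ+ := (d s).natAbs.toPNat'

def op (hb : ℝ) (d : ι → ℤ) (c : ι → ℂ) (s : ι) : Op :=
  if 0 < d s then creOp (vIdx d s) else if d s < 0 then annOp hb (vIdx d s)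
  else c s • LinearMap.id

def coeff (hb : ℝ) (d : ι → ℤ) (c : ι → ℂ) (l : List ι) (P : Finset (ι × ι)) : ℂ :=
  ((l.filter (fun s => decide (d s = 0))).map c).prod * (hb : ℂ) ^ P.card *
    ∏ p ∈ P, (((d p.2).natAbs : ℕ) : ℂ)

def creP (d : ι → ℤ) (l : List ι) (P : Finset (ι × ι)) : Op :=
  LinearMap.mulLeft ℂ
    ((l.filter (fun s => decide (0 < d s ∧ unp P s))).map (fun s => (X (vIdx d s) : MvP))).prod

def annP (hb : ℝ) (d : ι → ℤ) (l : List ι) (P : Finset (ι × ι)) : Op :=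
  ((l.filter (fun s => decide (d s < 0 ∧ unp P s))).map
    (fun s => annOp hb (vIdx d s))).foldr (· ∘ₗ ·) LinearMap.id

lemma vOn_cons {r : ι → ι → Prop} {d : ι → ℤ} {x : ι} {t : List ι}
    (hx : x ∉ t) {P : Finset (ι × ι)} (hno : ∀ p ∈ P, p.1 ≠ x ∧ p.2 ≠ x) :
    vOn r d (x :: t) P ↔ vOn r d t P := by
  unfold vOn
  constructor
  · rintro ⟨h1, h2⟩
    refine ⟨fun p hp => ?_, h2⟩
    obtain ⟨m1, m2, h3, h4, h5⟩ := h1 p hp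
    obtain ⟨n1, n2⟩ := hno p hp
    exact ⟨(List.mem_cons.mp m1).resolve_left n1, (List.mem_cons.mp m2).resolve_left n2,
      h3, h4, h5⟩
  · rintro ⟨h1, h2⟩
    refine ⟨fun p hp => ?_, h2⟩
    obtain ⟨m1, m2, h3, h4, h5⟩ := h1 p hp
    exact ⟨List.mem_cons_of_mem _ m1, List.mem_cons_of_mem _ m2, h3, h4, h5⟩

lemma vOn_no_x {r : ι → ι → Prop} {d : ι → ℤ} {x : ι} {t : List ι}
    (hx : x ∉ t) {P : Finset (ι × ι)} (hP : vOn r d t P) : ∀ p ∈ P, p.1 ≠ x ∧ p.2 ≠ x := by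
  intro p hp
  obtain ⟨m1, m2, -⟩ := hP.1 p hp
  exact ⟨fun e => hx (e ▸ m1), fun e => hx (e ▸ m2)⟩

theorem core (hb : ℝ) (d : ι → ℤ) (c : ι → ℂ) (r : ι → ι → Prop)
    (hirr : ∀ s, ¬ r s s) (hasym : ∀ s t, r s t → ¬ r t s) :
    ∀ (l : List ι), l.Pairwise r →
      ((l.map (op hb d c)).foldr (· ∘ₗ ·) LinearMap.id : Op) =
        ∑ P ∈ Finset.univ.filter (vOn r d l),
          coeff hb d c l P • (creP d l P ∘ₗ annP hb d l P) := by
  intro l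
  induction l with
  | nil =>
    intro _
    have he : Finset.univ.filter (vOn r d ([] : List ι)) = {(∅ : Finset (ι × ι))} := by
      ext P
      simp only [Finset.mem_filter, Finset.mem_univ, true_and, Finset.mem_singleton]
      constructor
      · rintro ⟨h1, -⟩
        refine Finset.eq_empty_of_forall_notMem fun p hp => ?_
        exact (List.not_mem_nil (a := p.1)) (h1 p hp).1
      · rintro rfl
        exact ⟨fun p hp => absurd hp (Finset.notMem_empty p), fun p hp => absurd hp (Finset.notMem_empty p)⟩
    rw [he, Finset.sum_singleton]
    simp [coeff, creP, annP, LinearMap.mulLeft_one]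
  | cons x t ih =>
    intro hpw
    obtain ⟨hxr, hpw'⟩ := List.pairwise_cons.mp hpw
    have hx : x ∉ t := fun hxt => hirr x (hxr x hxt)
    have IH := ih hpw'
    rw [List.map_cons, List.foldr_cons, IH, comp_sum]
    rcases lt_trichotomy (d x) 0 with hdx | hdx | hdx
    · -- annihilation case
      have hnd : t.Nodup := by
        refine hpw'.imp fun {a b} hab => ?_
        rintro rfl; exact hirr _ hab
      have hkn : ((vIdx d x : ℕ+) : ℕ) = (d x).natAbs :=
        PNat.toPNat'_coe (Int.natAbs_pos.mpr (by omega))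
      have hop : op hb d c x = annOp hb (vIdx d x) := by
        unfold op; rw [if_neg (by omega), if_pos hdx]
      -- the creation polynomial attached to a pairing set on t
      set M : Finset (ι × ι) → MvP := fun P =>
        ((t.filter (fun s => decide (0 < d s ∧ unp P s))).map
          (fun s => (X (vIdx d s) : MvP))).prod with hM
      set σ : ℂ := ((hb * (((vIdx d x : ℕ+) : ℕ) : ℝ) : ℝ) : ℂ) with hσ
      have hexp : ∀ P ∈ Finset.univ.filter (vOn r d t),
          op hb d c x ∘ₗ (coeff hb d c t P • (creP d t P ∘ₗ annP hb d t P)) =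
            coeff hb d c t P • (creP d t P ∘ₗ (annOp hb (vIdx d x) ∘ₗ annP hb d t P))
              + coeff hb d c t P • (σ • (LinearMap.mulLeft ℂ
                  (pderiv (R := ℂ) (vIdx d x) (M P)) ∘ₗ annP hb d t P)) := by
        intro P _
        rw [hop, comp_smul', ← smul_add]
        congr 1
        rw [show creP d t P = LinearMap.mulLeft ℂ (M P) from rfl,
          ← LinearMap.comp_assoc, ann_comp_mulLeft, LinearMap.add_comp,
          LinearMap.smul_comp, LinearMap.comp_assoc, add_comm]
      rw [Finset.sum_congr rfl hexp, Finset.sum_add_distrib]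
      rw [← Finset.sum_filter_add_sum_filter_not
        (Finset.univ.filter (vOn r d (x :: t))) (fun P => unp P x)
        (fun P => coeff hb d c (x :: t) P • (creP d (x :: t) P ∘ₗ annP hb d (x :: t) P))]
      have hE1 : (Finset.univ.filter (vOn r d (x :: t))).filter (fun P => unp P x)
          = Finset.univ.filter (vOn r d t) := by
        ext P
        simp only [Finset.mem_filter, Finset.mem_univ, true_and]
        constructor
        · rintro ⟨hv, hu⟩
          exact (vOn_cons hx (fun p hp => hu p hp)).mp hv
        · intro hv
          exact ⟨(vOn_cons hx (vOn_no_x hx hv)).mpr hv, fun p hp => vOn_no_x hx hv p hp⟩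
      rw [hE1]
      congr 1
      · -- unpaired-x part
        refine Finset.sum_congr rfl fun P hP => ?_
        have hv : vOn r d t P := (Finset.mem_filter.mp hP).2
        have hu : unp P x := fun p hp => vOn_no_x hx hv p hp
        have hcoeff : coeff hb d c (x :: t) P = coeff hb d c t P := by
          unfold coeff
          rw [List.filter_cons_of_neg (by simp only [decide_eq_true_eq]; omega)]
        have hcre : creP d (x :: t) P = creP d t P := by
          unfold creP
          rw [List.filter_cons_of_neg (by simp only [decide_eq_true_eq, not_and]; omega)]
        have hann : annP hb d (x :: t) P = annOp hb (vIdx d x) ∘ₗ annP hb d t P := by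
          unfold annP
          rw [List.filter_cons_of_pos (by simp only [decide_eq_true_eq]; exact ⟨hdx, hu⟩),
            List.map_cons, List.foldr_cons]
        rw [hcoeff, hcre, hann]
      · -- paired-x part
        set Y : Finset (ι × ι) → Finset ι := fun P =>
          Finset.univ.filter (fun y => y ∈ t ∧ 0 < d y ∧ unp P y ∧ d y = -(d x)) with hY
        have hYmem : ∀ P y, y ∈ Y P ↔ y ∈ t ∧ 0 < d y ∧ unp P y ∧ d y = -(d x) := by
          intro P y; rw [hY]; simp
        have hpd : ∀ P, pderiv (R := ℂ) (vIdx d x) (M P) =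
            ∑ y ∈ Y P, (((t.filter (fun s => decide (0 < d s ∧ unp P s))).erase y).map
              (fun s => (X (vIdx d s) : MvP))).prod := by
          intro P
          rw [show M P = ((t.filter (fun s => decide (0 < d s ∧ unp P s))).map
            (fun s => (X (vIdx d s) : MvP))).prod from rfl]
          rw [pderiv_list_prod (vIdx d x) (fun s => vIdx d s) _ (hnd.filter _)]
          rw [← List.sum_toFinset _ ((hnd.filter _).filter _)]
          congr 1
          ext z
          simp only [List.mem_toFinset, List.mem_filter, decide_eq_true_eq, hYmem]
          constructor
          · rintro ⟨⟨hzt, hz1, hz2⟩, hz3⟩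
            have h1 : ((vIdx d z : ℕ+) : ℕ) = ((vIdx d x : ℕ+) : ℕ) := by rw [hz3]
            rw [hkn, show ((vIdx d z : ℕ+) : ℕ) = (d z).natAbs from
              PNat.toPNat'_coe (Int.natAbs_pos.mpr (by omega))] at h1
            exact ⟨hzt, hz1, hz2, by omega⟩
          · rintro ⟨hzt, hz1, hz2, hz3⟩
            have h4 : (d z).natAbs = (d x).natAbs := by omega
            exact ⟨⟨hzt, hz1, hz2⟩, by unfold vIdx; rw [h4]⟩
        have hterm : ∀ P ∈ Finset.univ.filter (vOn r d t),
            coeff hb d c t P • (σ • (LinearMap.mulLeft ℂ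
                (pderiv (R := ℂ) (vIdx d x) (M P)) ∘ₗ annP hb d t P)) =
              ∑ y ∈ Y P, coeff hb d c (x :: t) (insert (x, y) P) •
                (creP d (x :: t) (insert (x, y) P) ∘ₗ annP hb d (x :: t) (insert (x, y) P)) := by
          intro P hP
          have hv : vOn r d t P := (Finset.mem_filter.mp hP).2
          rw [hpd P, mulLeft_sum, sum_comp', Finset.smul_sum, Finset.smul_sum]
          refine Finset.sum_congr rfl fun y hy => ?_
          obtain ⟨hyt, hdy, huy, hdyx⟩ := (hYmem P y).mp hy
          have hxyP : (x, y) ∉ P := fun hmem => hx ((hv.1 _ hmem).1)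
          -- coefficient
          have hcoeff : coeff hb d c (x :: t) (insert (x, y) P) = coeff hb d c t P * σ := by
            unfold coeff
            rw [List.filter_cons_of_neg (by simp only [decide_eq_true_eq]; omega),
              Finset.card_insert_of_notMem hxyP, Finset.prod_insert hxyP]
            have h1 : ((d (x, y).2).natAbs : ℂ) = (((d x).natAbs : ℕ) : ℂ) := by
              have h2 : (d y).natAbs = (d x).natAbs := by omega
              simp only [show (x, y).2 = y from rfl, h2]
            rw [h1, hσ, hkn]
            push_cast
            ring
          -- creation part
          have hcre : creP d (x :: t) (insert (x, y) P) = LinearMap.mulLeft ℂ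
              (((t.filter (fun s => decide (0 < d s ∧ unp P s))).erase y).map
                (fun s => (X (vIdx d s) : MvP))).prod := by
            unfold creP
            congr 2
            rw [List.filter_cons_of_neg (by simp only [decide_eq_true_eq, not_and]; omega)]
            rw [(hnd.filter _).erase_eq_filter y, List.filter_filter]
            refine congrArg (List.map _) (List.filter_congr fun s hs => ?_)
            have hsx : s ≠ x := fun e => hx (e ▸ hs)
            rw [Bool.eq_iff_iff]
            simp only [decide_eq_true_eq, Bool.and_eq_true, bne_iff_ne, ne_eq]
            constructor
            · rintro ⟨h1, hu⟩
              refine ⟨(hu (x, y) (Finset.mem_insert_self _ _)).2.symm,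
                h1, fun p hp => hu p (Finset.mem_insert_of_mem hp)⟩
            · rintro ⟨hsy, h1, hu⟩
              refine ⟨h1, fun p hp => ?_⟩
              rcases Finset.mem_insert.mp hp with rfl | hp'
              · exact ⟨hsx.symm, fun e => hsy e.symm⟩
              · exact hu p hp'
          -- annihilation part
          have hann : annP hb d (x :: t) (insert (x, y) P) = annP hb d t P := by
            unfold annP
            have h2 : ¬ (d x < 0 ∧ unp (insert (x, y) P) x) := by
              rintro ⟨-, hu⟩
              exact (hu (x, y) (Finset.mem_insert_self _ _)).1 rfl
            rw [List.filter_cons_of_neg (by simpa using h2)]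
            refine congrArg _ (congrArg (List.map _) (List.filter_congr fun s hs => ?_))
            have hsx : s ≠ x := fun e => hx (e ▸ hs)
            have hsy : d s < 0 → s ≠ y := fun hds e => by rw [e] at hds; omega
            rw [Bool.eq_iff_iff]
            simp only [decide_eq_true_eq]
            constructor
            · rintro ⟨h1, hu⟩
              exact ⟨h1, fun p hp => hu p (Finset.mem_insert_of_mem hp)⟩
            · rintro ⟨h1, hu⟩
              refine ⟨h1, fun p hp => ?_⟩
              rcases Finset.mem_insert.mp hp with rfl | hp'
              · exact ⟨hsx.symm, ((hsy h1).symm : (x, y).2 ≠ s)⟩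
              · exact hu p hp'
          rw [hcoeff, hcre, hann, smul_smul, mul_comm]
        rw [Finset.sum_congr rfl hterm, Finset.sum_sigma']
        have hvI : ∀ (P : Finset (ι × ι)), vOn r d t P → ∀ y, y ∈ Y P →
            vOn r d (x :: t) (insert (x, y) P) := by
          intro P hv y hy
          obtain ⟨hyt, hdy, huy, hdyx⟩ := (hYmem P y).mp hy
          constructor
          · intro p hp
            rcases Finset.mem_insert.mp hp with rfl | hp'
            · exact ⟨List.mem_cons_self, List.mem_cons_of_mem _ hyt, hxr y hyt, hdx,
                hdyx⟩
            · obtain ⟨m1, m2, h3, h4, h5⟩ := hv.1 p hp'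
              exact ⟨List.mem_cons_of_mem _ m1, List.mem_cons_of_mem _ m2, h3, h4, h5⟩
          · intro p hp q hq hpq
            have hx1 : ∀ p' ∈ P, p'.1 ≠ x ∧ p'.2 ≠ x := vOn_no_x hx hv
            rcases Finset.mem_insert.mp hp with rfl | hp' <;>
              rcases Finset.mem_insert.mp hq with rfl | hq'
            · exact absurd rfl hpq
            · exact ⟨(hx1 q hq').1.symm, (hx1 q hq').2.symm,
                fun e => (huy q hq').1 e.symm, fun e => (huy q hq').2 e.symm⟩
            · exact ⟨(hx1 p hp').1, (huy p hp').1, (hx1 p hp').2, (huy p hp').2⟩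
            · exact hv.2 p hp' q hq' hpq
        refine Finset.sum_bij (fun q _ => insert (x, q.2) q.1) ?_ ?_ ?_ ?_
        · rintro ⟨P, y⟩ hq
          obtain ⟨hPT, hyY⟩ := Finset.mem_sigma.mp hq
          have hv : vOn r d t P := (Finset.mem_filter.mp hPT).2
          simp only [Finset.mem_filter, Finset.mem_univ, true_and]
          refine ⟨hvI P hv y hyY, fun hu => ?_⟩
          exact (hu (x, y) (Finset.mem_insert_self _ _)).1 rfl
        · rintro ⟨P₁, y₁⟩ h₁ ⟨P₂, y₂⟩ h₂ heq
          dsimp only at heq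
          obtain ⟨hP₁, hy₁⟩ := Finset.mem_sigma.mp h₁
          obtain ⟨hP₂, hy₂⟩ := Finset.mem_sigma.mp h₂
          have hv₁ : vOn r d t P₁ := (Finset.mem_filter.mp hP₁).2
          have hv₂ : vOn r d t P₂ := (Finset.mem_filter.mp hP₂).2
          have hmem : ∀ (P : Finset (ι × ι)), vOn r d t P → ∀ p ∈ P, p.1 ≠ x :=
            fun P hv p hp e => hx (e ▸ (hv.1 p hp).1)
          have hyy : y₁ = y₂ := by
            have h3 : ((x, y₁) : ι × ι) ∈ insert (x, y₂) P₂ := by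
              rw [← heq]; exact Finset.mem_insert_self _ _
            rcases Finset.mem_insert.mp h3 with e | hmem'
            · exact congrArg Prod.snd e
            · exact absurd rfl (hmem P₂ hv₂ _ hmem')
          subst hyy
          have hPP : P₁ = P₂ := by
            ext p
            constructor
            · intro hp
              have : p ∈ insert (x, y₁) P₂ := by
                rw [← heq]; exact Finset.mem_insert_of_mem hp
              rcases Finset.mem_insert.mp this with rfl | hp'
              · exact absurd rfl (hmem P₁ hv₁ _ hp)
              · exact hp'
            · intro hp
              have : p ∈ insert (x, y₁) P₁ := by
                rw [heq]; exact Finset.mem_insert_of_mem hp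
              rcases Finset.mem_insert.mp this with rfl | hp'
              · exact absurd rfl (hmem P₂ hv₂ _ hp)
              · exact hp'
          rw [hPP]
        · intro b hb'
          simp only [Finset.mem_filter, Finset.mem_univ, true_and] at hb'
          obtain ⟨hvB, hnu⟩ := hb'
          have hex : ∃ p ∈ b, p.1 = x := by
            by_contra hcon
            push_neg at hcon
            refine hnu fun p hp => ⟨hcon p hp, fun e => ?_⟩
            obtain ⟨-, -, -, h4, h5⟩ := hvB.1 p hp
            rw [e] at h5
            omega
          obtain ⟨p₀, hp₀, he1⟩ := hex
          have hp0 : p₀ = (x, p₀.2) := Prod.ext he1 rfl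
          obtain ⟨m1, m2, h3, h4, h5⟩ := hvB.1 p₀ hp₀
          have hy2x : p₀.2 ≠ x := fun e => by rw [he1, e] at h5; omega
          have hyt : p₀.2 ∈ t := (List.mem_cons.mp m2).resolve_left hy2x
          have hP' : vOn r d t (b.erase p₀) := by
            constructor
            · intro p hp
              have hpb := Finset.mem_of_mem_erase hp
              have hne := Finset.ne_of_mem_erase hp
              have hdis := hvB.2 p hpb p₀ hp₀ hne
              obtain ⟨n1, n2, n3, n4, n5⟩ := hvB.1 p hpb
              exact ⟨(List.mem_cons.mp n1).resolve_left (fun e => hdis.1 (e.trans he1.symm)),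
                (List.mem_cons.mp n2).resolve_left (fun e => hdis.2.2.1 (e.trans he1.symm)),
                n3, n4, n5⟩
            · intro p hp q hq hpq
              exact hvB.2 p (Finset.mem_of_mem_erase hp) q (Finset.mem_of_mem_erase hq) hpq
          refine ⟨⟨b.erase p₀, p₀.2⟩, Finset.mem_sigma.mpr ⟨?_, ?_⟩, ?_⟩
          · simp only [Finset.mem_filter, Finset.mem_univ, true_and]
            exact hP'
          · dsimp only
            refine (hYmem _ _).mpr ⟨hyt, by omega, ?_, by rw [← he1]; omega⟩
            intro p hp
            have hdis := hvB.2 p (Finset.mem_of_mem_erase hp) p₀ hp₀ (Finset.ne_of_mem_erase hp)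
            exact ⟨hdis.2.1, hdis.2.2.2⟩
          · dsimp only
            rw [← hp0]
            exact Finset.insert_erase hp₀
        · intro q hq
          rfl
    · -- slide case
      have hop : op hb d c x = c x • LinearMap.id := by
        simp [op, hdx]
      have hset : Finset.univ.filter (vOn r d (x :: t)) = Finset.univ.filter (vOn r d t) := by
        ext P
        simp only [Finset.mem_filter, Finset.mem_univ, true_and]
        constructor
        · intro hv
          refine (vOn_cons hx ?_).mp hv
          intro p hp
          obtain ⟨-, -, -, h4, h5⟩ := hv.1 p hp
          exact ⟨fun e => by rw [e, hdx] at h4; omega,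
            fun e => by rw [e, hdx] at h5; omega⟩
        · intro hv
          exact (vOn_cons hx (vOn_no_x hx hv)).mpr hv
      rw [hset]
      refine Finset.sum_congr rfl fun P hP => ?_
      have hv : vOn r d t P := (Finset.mem_filter.mp hP).2
      have hcoeff : coeff hb d c (x :: t) P = c x * coeff hb d c t P := by
        unfold coeff
        rw [List.filter_cons_of_pos (by simp [hdx]), List.map_cons, List.prod_cons]
        ring
      have hcre : creP d (x :: t) P = creP d t P := by
        unfold creP
        rw [List.filter_cons_of_neg (by simp [hdx])]
      have hann : annP hb d (x :: t) P = annP hb d t P := by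
        unfold annP
        rw [List.filter_cons_of_neg (by simp [hdx])]
      rw [hop, hcoeff, hcre, hann, comp_smul', LinearMap.smul_comp, LinearMap.id_comp,
        smul_smul, mul_comm]
    · -- creation case
      have hop : op hb d c x = creOp (vIdx d x) := by simp [op, hdx]
      have hset : Finset.univ.filter (vOn r d (x :: t)) = Finset.univ.filter (vOn r d t) := by
        ext P
        simp only [Finset.mem_filter, Finset.mem_univ, true_and]
        constructor
        · intro hv
          refine (vOn_cons hx ?_).mp hv
          intro p hp
          obtain ⟨m1, -, h3, h4, -⟩ := hv.1 p hp
          refine ⟨fun e => by rw [e] at h4; omega, fun e => ?_⟩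
          have h3' : r p.1 x := e ▸ h3
          rcases List.mem_cons.mp m1 with e1 | e1
          · exact hirr x (e1 ▸ h3')
          · exact hasym _ _ (hxr _ e1) h3'
        · intro hv
          exact (vOn_cons hx (vOn_no_x hx hv)).mpr hv
      rw [hset]
      refine Finset.sum_congr rfl fun P hP => ?_
      have hv : vOn r d t P := (Finset.mem_filter.mp hP).2
      have hunp : unp P x := by
        intro p hp; exact vOn_no_x hx hv p hp
      have hcoeff : coeff hb d c (x :: t) P = coeff hb d c t P := by
        unfold coeff
        rw [List.filter_cons_of_neg (by simp only [decide_eq_true_eq]; omega)]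
      have hcre : creP d (x :: t) P = creOp (vIdx d x) ∘ₗ creP d t P := by
        unfold creP
        rw [List.filter_cons_of_pos (by simp [hdx]; exact hunp), List.map_cons,
          List.prod_cons, LinearMap.mulLeft_mul]
        rfl
      have hann : annP hb d (x :: t) P = annP hb d t P := by
        unfold annP
        rw [List.filter_cons_of_neg (by simp only [decide_eq_true_eq, not_and]; omega)]
      rw [hop, hcoeff, hcre, hann, comp_smul', LinearMap.comp_assoc]

end
end NSAux

noncomputable section GlueSec
open NSAux

variable {n : ℕ} {ℓv : Fin n → ℕ}

lemma mstepLt_irrefl (s : MStep n ℓv) : ¬ mstepLt s s := by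
  simp [mstepLt]

lemma mstepLt_asymm (s t : MStep n ℓv) : mstepLt s t → ¬ mstepLt t s := by
  rintro (h | ⟨e, h⟩) (h' | ⟨e', h'⟩)
  · exact absurd h' (lt_asymm h)
  · rw [e'] at h; exact lt_irrefl _ h
  · rw [e] at h'; exact lt_irrefl _ h'
  · omega

lemma mstepList_complete (s : MStep n ℓv) : s ∈ mstepList n ℓv := by
  unfold mstepList
  rw [List.mem_flatMap]
  exact ⟨s.1, List.mem_finRange _, List.mem_map.mpr ⟨s.2, List.mem_finRange _, rfl⟩⟩

lemma mstepList_pairwise : (mstepList n ℓv).Pairwise mstepLt := by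
  unfold mstepList
  rw [List.pairwise_flatMap]
  constructor
  · intro a _
    rw [List.pairwise_map]
    refine (List.pairwise_lt_finRange (ℓv a)).imp fun hij => ?_
    exact Or.inr ⟨rfl, hij⟩
  · refine (List.pairwise_lt_finRange n).imp ?_
    intro a b hab
    intro p hp q hq
    obtain ⟨i, -, rfl⟩ := List.mem_map.mp hp
    obtain ⟨j, -, rfl⟩ := List.mem_map.mp hq
    exact Or.inl hab

lemma pathOp_eq (ε hb : ℝ) : ∀ (ℓ : ℕ) (g : Fin (ℓ + 1) → ℕ),
    pathOp ε hb (List.ofFn g) =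
      ((List.finRange ℓ).map (fun i => stepOp ε hb (g i.castSucc) (g i.succ))).foldr
        (· ∘ₗ ·) LinearMap.id := by
  intro ℓ
  induction ℓ with
  | zero =>
    intro g
    simp [List.ofFn_succ, pathOp]
  | succ m ihm =>
    intro g
    have h1 : List.ofFn g = g 0 :: g 1 :: List.ofFn (fun i : Fin m => g i.succ.succ) := by
      rw [List.ofFn_succ, List.ofFn_succ]
      rfl
    have h2 : List.ofFn (fun i : Fin (m + 1) => g i.succ) =
        g 1 :: List.ofFn (fun i : Fin m => g i.succ.succ) := by
      rw [List.ofFn_succ]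
      rfl
    rw [h1, show pathOp ε hb (g 0 :: g 1 :: List.ofFn (fun i : Fin m => g i.succ.succ)) =
        stepOp ε hb (g 0) (g 1) ∘ₗ
          pathOp ε hb (g 1 :: List.ofFn (fun i : Fin m => g i.succ.succ)) from rfl,
      ← h2, ihm (fun i => g i.succ), List.finRange_succ]
    simp only [List.map_cons, List.foldr_cons, List.map_map]
    refine congrArg₂ (· ∘ₗ ·) ?_
      (congrArg (List.foldr (· ∘ₗ ·) LinearMap.id) (List.map_congr_left fun i _ => ?_))
    · congr 1 <;> simp
    · simp only [Function.comp_apply]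
      rw [Fin.succ_castSucc]

lemma mstepList_nodup : (mstepList n ℓv).Nodup := by
  refine (mstepList_pairwise (n := n) (ℓv := ℓv)).imp fun {a b} hab => ?_
  rintro rfl
  exact mstepLt_irrefl _ hab

def cfun (ε : ℝ) (h : ∀ a : Fin n, Fin (ℓv a + 1) → ℕ) : MStep n ℓv → ℂ :=
  fun s => ((ε * ((h s.1 s.2.succ : ℕ) : ℝ) : ℝ) : ℂ)

lemma stepOp_eq (ε hb : ℝ) (h : ∀ a : Fin n, Fin (ℓv a + 1) → ℕ) (s : MStep n ℓv) :
    stepOp ε hb (h s.1 s.2.castSucc) (h s.1 s.2.succ) = op hb (mdeg h) (cfun ε h) s := by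
  obtain ⟨a, i⟩ := s
  have hd : mdeg h ⟨a, i⟩ = ((h a i.succ : ℕ) : ℤ) - ((h a i.castSucc : ℕ) : ℤ) := rfl
  unfold stepOp op
  by_cases hlt : h a i.castSucc < h a i.succ
  · rw [dif_pos hlt, if_pos (by rw [hd]; omega)]
    refine congrArg creOp (PNat.coe_inj.mp ?_)
    show h a i.succ - h a i.castSucc = ((mdeg h ⟨a, i⟩).natAbs.toPNat' : ℕ)
    rw [PNat.toPNat'_coe (Int.natAbs_pos.mpr (by rw [hd]; omega)), hd]
    omega
  · by_cases hgt : h a i.succ < h a i.castSucc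
    · rw [dif_neg hlt, dif_pos hgt, if_neg (by rw [hd]; omega), if_pos (by rw [hd]; omega)]
      refine congrArg (annOp hb) (PNat.coe_inj.mp ?_)
      show h a i.castSucc - h a i.succ = ((mdeg h ⟨a, i⟩).natAbs.toPNat' : ℕ)
      rw [PNat.toPNat'_coe (Int.natAbs_pos.mpr (by rw [hd]; omega)), hd]
      omega
    · rw [dif_neg hlt, dif_neg hgt, if_neg (by rw [hd]; omega), if_neg (by rw [hd]; omega)]
      unfold cfun
      have he : h a i.castSucc = h a i.succ := by omega
      rw [he]

lemma lhs_eq (ε hb : ℝ) (h : ∀ a : Fin n, Fin (ℓv a + 1) → ℕ) :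
    ((List.finRange n).map fun a => pathOp ε hb (List.ofFn (h a))).foldr (· ∘ₗ ·)
        LinearMap.id =
      ((mstepList n ℓv).map (op hb (mdeg h) (cfun ε h))).foldr (· ∘ₗ ·) LinearMap.id := by
  unfold mstepList
  rw [List.map_flatMap, foldr_comp_flatMap]
  refine congrArg _ (List.map_congr_left fun a _ => ?_)
  rw [pathOp_eq, List.map_map]
  exact congrArg _ (List.map_congr_left fun i _ => stepOp_eq ε hb h ⟨a, i⟩)

lemma list_prod_filter {β : Type*} [CommMonoid β] (p : MStep n ℓv → Prop) [DecidablePred p]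
    (f : MStep n ℓv → β) :
    (((mstepList n ℓv).filter (fun s => decide (p s))).map f).prod =
      ∏ s ∈ Finset.univ.filter p, f s := by
  rw [← List.prod_toFinset f (mstepList_nodup.filter _)]
  congr 1
  ext z
  simp [List.mem_toFinset, List.mem_filter, mstepList_complete]

end GlueSec

/-- Normal-ordering (Wick) decomposition of a product of Nazarov–Sklyanin
path operators: for sliding paths γ₁, …, γₙ (heights h a, with endpoint heights 0) with m
slides in total, Ŝ(γ₁)∘⋯∘Ŝ(γₙ) = Σ_P ε̄^m·(∏ slide heights)·ħ^{|P|}·(∏ sizes)·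
(unpaired creation part)∘(unpaired annihilation part), the sum ranging over all sets P of
pairwise disjoint pairings of the steps of (γ₁,…,γₙ). -/
theorem product_path_operators_normal_ordering (ε hb : ℝ) (hhb : 0 < hb)
    (n : ℕ) (hn : 1 ≤ n) (ℓv : Fin n → ℕ)
    (h : ∀ a : Fin n, Fin (ℓv a + 1) → ℕ)
    (h0 : ∀ a, h a 0 = 0) (hl : ∀ a, h a (Fin.last (ℓv a)) = 0)
    (m : ℕ) (hm : m = (Finset.univ.filter fun s : MStep n ℓv => mdeg h s = 0).card) :
    ((List.finRange n).map fun a => pathOp ε hb (List.ofFn (h a))).foldr (· ∘ₗ ·)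
        LinearMap.id =
      ∑ P ∈ Finset.univ.filter (fun P : Finset (MStep n ℓv × MStep n ℓv) =>
          ValidMPairingSet h P),
        (((ε : ℂ) ^ m *
            (∏ s ∈ Finset.univ.filter (fun s : MStep n ℓv => mdeg h s = 0),
              ((h s.1 s.2.succ : ℕ) : ℂ)) *
            (hb : ℂ) ^ P.card * ∏ p ∈ P, (((mdeg h p.2).natAbs : ℕ) : ℂ)) •
          (creMPart h P ∘ₗ annMPart hb h P)) := by
  have hcore := NSAux.core hb (mdeg h) (cfun ε h) mstepLt (fun s => mstepLt_irrefl s)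
    (fun s t => mstepLt_asymm s t) (mstepList n ℓv) mstepList_pairwise
  rw [lhs_eq ε hb h, hcore]
  have hset : Finset.univ.filter (NSAux.vOn mstepLt (mdeg h) (mstepList n ℓv)) =
      Finset.univ.filter (fun P => ValidMPairingSet h P) := by
    apply Finset.filter_congr
    intro P _
    unfold NSAux.vOn ValidMPairingSet IsMPairing
    constructor
    · rintro ⟨h1, h2⟩
      refine ⟨fun p hp => ?_, h2⟩
      obtain ⟨-, -, h3, h4, h5⟩ := h1 p hp
      exact ⟨h3, h4, h5⟩
    · rintro ⟨h1, h2⟩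
      refine ⟨fun p hp => ?_, h2⟩
      obtain ⟨h3, h4, h5⟩ := h1 p hp
      exact ⟨mstepList_complete _, mstepList_complete _, h3, h4, h5⟩
  rw [hset]
  refine Finset.sum_congr rfl fun P hP => ?_
  have hsc : NSAux.coeff hb (mdeg h) (cfun ε h) (mstepList n ℓv) P =
      (ε : ℂ) ^ m *
        (∏ s ∈ Finset.univ.filter (fun s : MStep n ℓv => mdeg h s = 0),
          ((h s.1 s.2.succ : ℕ) : ℂ)) *
        (hb : ℂ) ^ P.card * ∏ p ∈ P, (((mdeg h p.2).natAbs : ℕ) : ℂ) := by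
    unfold NSAux.coeff
    rw [list_prod_filter (p := fun s : MStep n ℓv => mdeg h s = 0) (cfun ε h)]
    have h1 : ∀ s : MStep n ℓv, cfun ε h s = (ε : ℂ) * ((h s.1 s.2.succ : ℕ) : ℂ) := by
      intro s
      unfold cfun
      push_cast
      ring
    rw [Finset.prod_congr rfl (fun s _ => h1 s), Finset.prod_mul_distrib,
      Finset.prod_const, hm]
  have hcre : NSAux.creP (mdeg h) (mstepList n ℓv) P = creMPart h P := by
    unfold NSAux.creP creMPart
    congr 1
    rw [list_prod_filter (p := fun s : MStep n ℓv => 0 < mdeg h s ∧ NSAux.unp P s)]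
    refine Finset.prod_congr (Finset.filter_congr fun s _ => ?_) (fun _ _ => rfl)
    exact Iff.rfl
  have hann : NSAux.annP hb (mdeg h) (mstepList n ℓv) P = annMPart hb h P := by
    unfold NSAux.annP annMPart
    refine congrArg _ (congrArg _ (List.filter_congr fun s _ => ?_))
    exact decide_eq_decide.mpr Iff.rfl
  rw [hsc, hcre, hann]
end

section
/- Let ħ > 0 and let (V_k)_{k≥1} be complex numbers with Σ_k |V_k|² < ∞. Then the family indexed by finitely supported functions d : {1, 2, 3, …} → ℕ with terms ( Σ_k k·d(k) ) · ∏_k ( ( |V_k|² / (ħ·k) )^{d(k)} / d(k)! ) is summable, and its sum equals ( (1/ħ)·Σ_k |V_k|² ) · exp( (1/ħ)·Σ_k |V_k|²/k ). -/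
open Finset Finsupp Function

private lemma hasSum_expSeries (x : ℝ) :
    HasSum (fun n : ℕ => x ^ n / (n.factorial : ℝ)) (Real.exp x) := by
  rw [Real.exp_eq_exp_ℝ]
  exact NormedSpace.expSeries_div_hasSum_exp x

set_option maxHeartbeats 1000000 in
private lemma lemA {ι : Type*} [DecidableEq ι] (a : ι → ℝ) (s : Finset ι) :
    HasSum (fun d : {d : ι →₀ ℕ // d.support ⊆ s} =>
      ∏ k ∈ s, a k ^ (d.1 k) / ((d.1 k).factorial : ℝ)) (∏ k ∈ s, Real.exp (a k)) := by
  classical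
  induction s using Finset.induction_on with
  | empty =>
      have hb : ∀ b : {d : ι →₀ ℕ // d.support ⊆ (∅ : Finset ι)},
          b = ⟨0, by simp⟩ := by
        rintro ⟨d, hd⟩
        exact Subtype.ext (Finsupp.support_eq_empty.mp (Finset.subset_empty.mp hd))
      have := hasSum_single (f := fun d : {d : ι →₀ ℕ // d.support ⊆ (∅ : Finset ι)} =>
        ∏ k ∈ (∅ : Finset ι), a k ^ (d.1 k) / ((d.1 k).factorial : ℝ))
        (⟨0, by simp⟩ : {d : ι →₀ ℕ // d.support ⊆ (∅ : Finset ι)})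
        (fun b hb' => absurd (hb b) hb')
      simpa using this
  | @insert k₀ s hk₀ ih =>
      let e : ℕ × {d : ι →₀ ℕ // d.support ⊆ s} ≃ {d : ι →₀ ℕ // d.support ⊆ insert k₀ s} :=
      { toFun := fun p => ⟨Finsupp.single k₀ p.1 + p.2.1, by
          refine Finsupp.support_add.trans (Finset.union_subset ?_ ?_)
          · exact (Finsupp.support_single_subset).trans (by simp)
          · exact p.2.2.trans (Finset.subset_insert _ _)⟩
        invFun := fun d => (d.1 k₀, ⟨d.1.erase k₀, by
          rw [Finsupp.support_erase]
          exact (Finset.erase_subset_erase _ d.2).trans (Finset.erase_insert_subset _ _)⟩)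
        left_inv := by
          rintro ⟨n, d, hd⟩
          have hdk₀ : d k₀ = 0 := Finsupp.notMem_support_iff.mp (fun h => hk₀ (hd h))
          refine Prod.ext ?_ (Subtype.ext ?_)
          · simp [hdk₀]
          · simp only
            rw [Finsupp.erase_add, Finsupp.erase_single, zero_add,
              Finsupp.erase_of_notMem_support (fun h => hk₀ (hd h))]
        right_inv := by
          rintro ⟨d, hd⟩
          exact Subtype.ext (Finsupp.single_add_erase k₀ d) }
      have hnorm1 : Summable fun n : ℕ => ‖a k₀ ^ n / (n.factorial : ℝ)‖ :=
        summable_norm_iff.mpr (hasSum_expSeries (a k₀)).summable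
      have hnorm2 : Summable fun d : {d : ι →₀ ℕ // d.support ⊆ s} =>
          ‖∏ k ∈ s, a k ^ (d.1 k) / ((d.1 k).factorial : ℝ)‖ :=
        summable_norm_iff.mpr ih.summable
      have hmul := (hasSum_expSeries (a k₀)).mul ih
        (summable_mul_of_summable_norm hnorm1 hnorm2)
      rw [← Equiv.hasSum_iff e, Finset.prod_insert hk₀]
      have hco : ((fun d : {d : ι →₀ ℕ // d.support ⊆ insert k₀ s} =>
          ∏ k ∈ insert k₀ s, a k ^ (d.1 k) / ((d.1 k).factorial : ℝ)) ∘ e)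
          = fun p => (a k₀ ^ p.1 / (p.1.factorial : ℝ)) *
              ∏ k ∈ s, a k ^ (p.2.1 k) / ((p.2.1 k).factorial : ℝ) := by
        funext p
        obtain ⟨n, d, hd⟩ := p
        have hdk₀ : d k₀ = 0 := Finsupp.notMem_support_iff.mp (fun h => hk₀ (hd h))
        simp only [Function.comp_apply, e, Equiv.coe_fn_mk]
        rw [Finset.prod_insert hk₀]
        congr 1
        · simp [hdk₀]
        · refine Finset.prod_congr rfl fun k hk => ?_
          have hne : k ≠ k₀ := fun h => hk₀ (h ▸ hk)
          simp [Finsupp.single_apply, hne.symm]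
      rw [hco]
      exact hmul

set_option maxHeartbeats 1000000 in
private lemma lemB {ι : Type*} [DecidableEq ι] (a : ι → ℝ) (ha : ∀ k, 0 ≤ a k)
    (hsum : Summable a) :
    HasSum (fun d : ι →₀ ℕ => ∏ k ∈ d.support, a k ^ d k / ((d k).factorial : ℝ))
      (Real.exp (∑' k, a k)) := by
  classical
  set f : (ι →₀ ℕ) → ℝ := fun d => ∏ k ∈ d.support, a k ^ d k / ((d k).factorial : ℝ)
    with hfdef
  have hf0 : ∀ d, 0 ≤ f d := fun d =>
    Finset.prod_nonneg fun k _ => div_nonneg (pow_nonneg (ha k) _) (Nat.cast_nonneg _)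
  have key : ∀ s : Finset ι,
      HasSum (fun d : {d : ι →₀ ℕ // d.support ⊆ s} => f d.1)
        (Real.exp (∑ k ∈ s, a k)) := by
    intro s
    rw [Real.exp_sum]
    have hrw : (fun d : {d : ι →₀ ℕ // d.support ⊆ s} => f d.1)
        = fun d => ∏ k ∈ s, a k ^ (d.1 k) / ((d.1 k).factorial : ℝ) := by
      funext d
      exact Finsupp.prod_of_support_subset d.1 d.2
        (fun i n => a i ^ n / (n.factorial : ℝ)) (fun i _ => by simp)
    rw [hrw]
    exact lemA a s
  have bound : ∀ u : Finset (ι →₀ ℕ), ∑ d ∈ u, f d ≤ Real.exp (∑' k, a k) := by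
    intro u
    set s : Finset ι := u.sup Finsupp.support with hs
    have hsub : ∀ d ∈ u, d.support ⊆ s := fun d hd => Finset.le_sup hd
    let emb : {x // x ∈ u} ↪ {d : ι →₀ ℕ // d.support ⊆ s} :=
      ⟨fun x => ⟨x.1, hsub x.1 x.2⟩, by intro x y hxy; exact Subtype.ext (by simpa using congrArg Subtype.val hxy)⟩
    have h1 : ∑ d ∈ u, f d = ∑ y ∈ u.attach.map emb, f y.1 := by
      rw [Finset.sum_map]
      exact (Finset.sum_attach u f).symm
    have h3 : ∑ y ∈ u.attach.map emb, f y.1 ≤ Real.exp (∑ k ∈ s, a k) :=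
      sum_le_hasSum _ (fun _ _ => hf0 _) (key s)
    have h4 : Real.exp (∑ k ∈ s, a k) ≤ Real.exp (∑' k, a k) :=
      Real.exp_le_exp.mpr (Summable.sum_le_tsum s (fun k _ => ha k) hsum)
    rw [h1]; exact h3.trans h4
  set R : Set ℝ := Set.range fun u : Finset (ι →₀ ℕ) => ∑ d ∈ u, f d with hR
  have hne : R.Nonempty := ⟨∑ d ∈ (∅ : Finset (ι →₀ ℕ)), f d, ⟨∅, rfl⟩⟩
  have hbdd : BddAbove R := ⟨Real.exp (∑' k, a k), by rintro x ⟨u, rfl⟩; exact bound u⟩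
  have hlub := isLUB_csSup hne hbdd
  have hhs : HasSum f (sSup R) := hasSum_of_isLUB_of_nonneg _ hf0 hlub
  have hle : sSup R ≤ Real.exp (∑' k, a k) :=
    csSup_le hne (by rintro x ⟨u, rfl⟩; exact bound u)
  have hge : Real.exp (∑' k, a k) ≤ sSup R := by
    have h5 : ∀ s : Finset ι, Real.exp (∑ k ∈ s, a k) ≤ sSup R := by
      intro s
      refine le_of_tendsto (key s) (Filter.Eventually.of_forall fun t => ?_)
      have h6 : ∑ d ∈ t, f d.1 = ∑ y ∈ t.map (Function.Embedding.subtype _), f y := by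
        rw [Finset.sum_map]; rfl
      rw [h6]
      exact le_csSup hbdd ⟨_, rfl⟩
    have h7 : Filter.Tendsto (fun s : Finset ι => Real.exp (∑ k ∈ s, a k))
        Filter.atTop (nhds (Real.exp (∑' k, a k))) :=
      (Real.continuous_exp.continuousAt).tendsto.comp hsum.hasSum
    exact le_of_tendsto h7 (Filter.Eventually.of_forall h5)
  rwa [le_antisymm hle hge] at hhs

set_option maxHeartbeats 1000000 in
private lemma lemC {ι : Type*} [DecidableEq ι] (a : ι → ℝ) (e d : ι →₀ ℕ) (k : ι)
    (hd : d = e + Finsupp.single k 1) :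
    ((e k + 1 : ℕ) : ℝ) * ∏ j ∈ d.support, a j ^ d j / ((d j).factorial : ℝ)
    = a k * ∏ j ∈ e.support, a j ^ e j / ((e j).factorial : ℝ) := by
  classical
  set s := insert k e.support with hs
  have hesub : e.support ⊆ s := Finset.subset_insert _ _
  have hdsub : d.support ⊆ s := by
    rw [hd]
    refine Finsupp.support_add.trans (Finset.union_subset hesub ?_)
    exact Finsupp.support_single_subset.trans (by simp [hs])
  have hde : ∀ j, j ≠ k → d j = e j := by
    intro j hj
    simp [hd, Finsupp.single_apply, Ne.symm hj]
  have hdk : d k = e k + 1 := by simp [hd]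
  have h1 : (∏ j ∈ d.support, a j ^ d j / ((d j).factorial : ℝ))
      = ∏ j ∈ s, a j ^ d j / ((d j).factorial : ℝ) :=
    Finsupp.prod_of_support_subset d hdsub
      (fun i n => a i ^ n / (n.factorial : ℝ)) (fun i _ => by simp)
  have h2 : (∏ j ∈ e.support, a j ^ e j / ((e j).factorial : ℝ))
      = ∏ j ∈ s, a j ^ e j / ((e j).factorial : ℝ) :=
    Finsupp.prod_of_support_subset e hesub
      (fun i n => a i ^ n / (n.factorial : ℝ)) (fun i _ => by simp)
  have hk : k ∈ s := Finset.mem_insert_self _ _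
  rw [h1, h2, ← Finset.mul_prod_erase s (fun j => a j ^ d j / ((d j).factorial : ℝ)) hk,
    ← Finset.mul_prod_erase s (fun j => a j ^ e j / ((e j).factorial : ℝ)) hk]
  have h3 : ∏ j ∈ s.erase k, a j ^ d j / ((d j).factorial : ℝ)
      = ∏ j ∈ s.erase k, a j ^ e j / ((e j).factorial : ℝ) :=
    Finset.prod_congr rfl fun j hj => by rw [hde j (Finset.ne_of_mem_erase hj)]
  rw [h3, hdk, ← mul_assoc, ← mul_assoc]
  congr 1
  have hne : ((e k).factorial : ℝ) ≠ 0 := Nat.cast_ne_zero.mpr (Nat.factorial_ne_zero _)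
  have hne2 : ((e k : ℕ) + 1 : ℝ) ≠ 0 := by positivity
  rw [Nat.factorial_succ]
  push_cast
  field_simp
  ring

set_option maxHeartbeats 1000000 in
/-- expected size of a Jack-measure random partition, in the orthogonal
monomial basis.  Let ħ > 0 and (V_k)_{k≥1} be complex with Σ_k |V_k|² < ∞.  Then the family
indexed by finitely supported d : {1,2,…} → ℕ with terms
(Σ_k k·d(k)) · ∏_k ((|V_k|²/(ħk))^{d(k)}/d(k)!) is summable with sum
((1/ħ)·Σ_k |V_k|²) · exp((1/ħ)·Σ_k |V_k|²/k). -/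
theorem expected_size_identity (hb : ℝ) (hhb : 0 < hb) (V : ℕ+ → ℂ)
    (hV : Summable fun k : ℕ+ => ‖V k‖ ^ 2) :
    (Summable fun d : ℕ+ →₀ ℕ =>
      ((∑ k ∈ d.support, (k : ℕ) * d k : ℕ) : ℝ) *
        ∏ k ∈ d.support,
          (‖V k‖ ^ 2 / (hb * ((k : ℕ) : ℝ))) ^ (d k) / ((d k).factorial : ℝ)) ∧
    (∑' d : ℕ+ →₀ ℕ,
        ((∑ k ∈ d.support, (k : ℕ) * d k : ℕ) : ℝ) *
          ∏ k ∈ d.support,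
            (‖V k‖ ^ 2 / (hb * ((k : ℕ) : ℝ))) ^ (d k) / ((d k).factorial : ℝ))
      = ((1 / hb) * ∑' k : ℕ+, ‖V k‖ ^ 2) *
          Real.exp ((1 / hb) * ∑' k : ℕ+, ‖V k‖ ^ 2 / ((k : ℕ) : ℝ)) := by
  classical
  set a : ℕ+ → ℝ := fun k => ‖V k‖ ^ 2 / (hb * ((k : ℕ) : ℝ)) with hadef
  have hkpos : ∀ k : ℕ+, (0 : ℝ) < ((k : ℕ) : ℝ) := fun k => by exact_mod_cast k.pos
  have ha0 : ∀ k, 0 ≤ a k := fun k => div_nonneg (by positivity) (by positivity)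
  have hka : ∀ k : ℕ+, ((k : ℕ) : ℝ) * a k = 1 / hb * ‖V k‖ ^ 2 := by
    intro k
    rw [hadef]
    have := (hkpos k).ne'
    field_simp
  have hka' : (fun k : ℕ+ => ((k : ℕ) : ℝ) * a k) = fun k => 1 / hb * ‖V k‖ ^ 2 :=
    funext hka
  have hsa : Summable a := by
    refine Summable.of_nonneg_of_le ha0 (fun k => ?_) (hV.mul_left (1 / hb))
    rw [hadef]
    calc ‖V k‖ ^ 2 / (hb * ((k : ℕ) : ℝ)) ≤ ‖V k‖ ^ 2 / (hb * 1) := by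
          gcongr
          exact_mod_cast k.one_le
      _ = 1 / hb * ‖V k‖ ^ 2 := by rw [mul_one]; ring
  have hS : HasSum (fun k : ℕ+ => ((k : ℕ) : ℝ) * a k) (1 / hb * ∑' k : ℕ+, ‖V k‖ ^ 2) := by
    rw [hka']
    exact hV.hasSum.mul_left _
  have hEB := lemB a ha0 hsa
  have htsum : (∑' k, a k) = 1 / hb * ∑' k : ℕ+, ‖V k‖ ^ 2 / ((k : ℕ) : ℝ) := by
    rw [← tsum_mul_left]
    refine tsum_congr fun k => ?_
    rw [hadef]
    have := (hkpos k).ne'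
    field_simp
  rw [htsum] at hEB
  -- product summability and the double sum
  have hnf : Summable fun d : ℕ+ →₀ ℕ =>
      ‖∏ k ∈ d.support, a k ^ d k / ((d k).factorial : ℝ)‖ :=
    summable_norm_iff.mpr hEB.summable
  have hnS : Summable fun k : ℕ+ => ‖((k : ℕ) : ℝ) * a k‖ :=
    summable_norm_iff.mpr hS.summable
  have hmul := hS.mul hEB (summable_mul_of_summable_norm hnS hnf)
  -- transfer through the injection
  set h : (ℕ+ →₀ ℕ) × ℕ+ → ℝ := fun q =>
    ((q.2 : ℕ) : ℝ) * ((q.1 q.2 : ℕ) : ℝ) *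
      ∏ k ∈ q.1.support, a k ^ q.1 k / ((q.1 k).factorial : ℝ) with hhdef
  have hinj : Function.Injective
      (fun p : ℕ+ × (ℕ+ →₀ ℕ) => ((p.2 + Finsupp.single p.1 1, p.1) : (ℕ+ →₀ ℕ) × ℕ+)) := by
    rintro ⟨k₁, e₁⟩ ⟨k₂, e₂⟩ hpq
    have h2 : k₁ = k₂ := congrArg Prod.snd hpq
    have h1 : e₁ + Finsupp.single k₁ 1 = e₂ + Finsupp.single k₂ 1 := congrArg Prod.fst hpq
    rw [h2] at h1
    exact Prod.ext h2 (add_right_cancel h1)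
  have hrange : ∀ x ∉ Set.range
      (fun p : ℕ+ × (ℕ+ →₀ ℕ) => ((p.2 + Finsupp.single p.1 1, p.1) : (ℕ+ →₀ ℕ) × ℕ+)),
      h x = 0 := by
    rintro ⟨d, k⟩ hx
    by_contra hne
    have hdk : d k ≠ 0 := by
      intro h0
      apply hne
      rw [hhdef]
      simp [h0]
    refine hx ⟨(k, d - Finsupp.single k 1), ?_⟩
    have hle : Finsupp.single k 1 ≤ d :=
      Finsupp.single_le_iff.mpr (Nat.one_le_iff_ne_zero.mpr hdk)
    exact Prod.ext (tsub_add_cancel_of_le hle) rfl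
  have hcomp : (h ∘ fun p : ℕ+ × (ℕ+ →₀ ℕ) =>
      ((p.2 + Finsupp.single p.1 1, p.1) : (ℕ+ →₀ ℕ) × ℕ+))
      = fun p : ℕ+ × (ℕ+ →₀ ℕ) => ((p.1 : ℕ) : ℝ) * a p.1 *
          ∏ k ∈ p.2.support, a k ^ p.2 k / ((p.2 k).factorial : ℝ) := by
    funext p
    obtain ⟨k, e⟩ := p
    have hek : ((e + Finsupp.single k 1 : ℕ+ →₀ ℕ)) k = e k + 1 := by simp
    simp only [Function.comp_apply, hhdef]
    rw [hek, mul_assoc, mul_assoc]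
    congr 1
    exact lemC a e (e + Finsupp.single k 1) k rfl
  have hbig : HasSum h ((1 / hb * ∑' k : ℕ+, ‖V k‖ ^ 2) *
      Real.exp (1 / hb * ∑' k : ℕ+, ‖V k‖ ^ 2 / ((k : ℕ) : ℝ))) := by
    rw [← Function.Injective.hasSum_iff hinj hrange, hcomp]
    exact hmul
  have final : HasSum (fun d : ℕ+ →₀ ℕ =>
      ((∑ k ∈ d.support, (k : ℕ) * d k : ℕ) : ℝ) *
        ∏ k ∈ d.support, a k ^ d k / ((d k).factorial : ℝ))
      ((1 / hb * ∑' k : ℕ+, ‖V k‖ ^ 2) *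
        Real.exp (1 / hb * ∑' k : ℕ+, ‖V k‖ ^ 2 / ((k : ℕ) : ℝ))) := by
    refine hbig.prod_fiberwise fun d => ?_
    have h8 : HasSum (fun k : ℕ+ => h (d, k))
        (∑ k ∈ d.support, h (d, k)) := by
      refine hasSum_sum_of_ne_finset_zero fun k hk => ?_
      rw [hhdef]
      simp [Finsupp.notMem_support_iff.mp hk]
    have h9 : (∑ k ∈ d.support, h (d, k))
        = ((∑ k ∈ d.support, (k : ℕ) * d k : ℕ) : ℝ) *
            ∏ k ∈ d.support, a k ^ d k / ((d k).factorial : ℝ) := by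
      rw [hhdef]
      push_cast
      rw [Finset.sum_mul]
    rwa [h9] at h8
  exact ⟨final.summable, final.tsum_eq⟩
end

section
/- For ℓ ∈ ℕ, let M₁(ℓ) be the sum, over all sequences h₀, h₁, …, h_ℓ of nonnegative integers with h₀ = h_ℓ = 0, with h_i − h_{i−1} ∈ {−1, 0, +1} for all 1 ≤ i ≤ ℓ, and with exactly one index i such that h_i = h_{i−1}, of the common value h_i at that index. Then for every real u > 2, the series Σ_{ℓ≥0} M₁(ℓ)·u^{−ℓ−1} converges and equals S₋(u)² / (u² − 4), where S₋(u) := (u − √(u² − 4))/2. -/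
open scoped Classical

noncomputable section

/-- M₁(ℓ): the sum, over Motzkin-type paths 0 = h₀, h₁, …, h_ℓ = 0 in the nonnegative
integers with steps in {−1, 0, +1} and exactly one level step, of the height at which the
level step occurs. -/
def Mcount (ℓ : ℕ) : ℝ :=
  ∑ᶠ h : {h : Fin (ℓ + 1) → ℕ //
      h 0 = 0 ∧ h (Fin.last ℓ) = 0 ∧
        (∀ i : Fin ℓ,
          ((h i.succ : ℕ) : ℤ) - ((h i.castSucc : ℕ) : ℤ) = 1 ∨
          ((h i.succ : ℕ) : ℤ) - ((h i.castSucc : ℕ) : ℤ) = -1 ∨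
          ((h i.succ : ℕ) : ℤ) - ((h i.castSucc : ℕ) : ℤ) = 0) ∧
        (Finset.univ.filter fun i : Fin ℓ => h i.succ = h i.castSucc).card = 1},
    ∑ i ∈ Finset.univ.filter (fun i : Fin ℓ => h.1 i.succ = h.1 i.castSucc),
      ((h.1 i.succ : ℕ) : ℝ)

end

noncomputable section AuxGF
namespace MotzkinAux

def StepOk {ℓ : ℕ} (h : Fin (ℓ+1) → ℕ) : Prop :=
  ∀ i : Fin ℓ,
    ((h i.succ : ℕ) : ℤ) - ((h i.castSucc : ℕ) : ℤ) = 1 ∨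
    ((h i.succ : ℕ) : ℤ) - ((h i.castSucc : ℕ) : ℤ) = -1 ∨
    ((h i.succ : ℕ) : ℤ) - ((h i.castSucc : ℕ) : ℤ) = 0

def flats {ℓ : ℕ} (h : Fin (ℓ+1) → ℕ) : Finset (Fin ℓ) :=
  Finset.univ.filter fun i => h i.succ = h i.castSucc

def wt {ℓ : ℕ} (h : Fin (ℓ+1) → ℕ) : ℝ := ∑ i ∈ flats h, ((h i.succ : ℕ) : ℝ)

def Fn (ℓ a : ℕ) (h : Fin (ℓ+1) → ℕ) : ℝ :=
  if h 0 = a ∧ h (Fin.last ℓ) = 0 ∧ StepOk h ∧ (flats h).card = 0 then 1 else 0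

def Fw (ℓ a : ℕ) (h : Fin (ℓ+1) → ℕ) : ℝ :=
  if h 0 = a ∧ h (Fin.last ℓ) = 0 ∧ StepOk h ∧ (flats h).card = 1 then wt h else 0

def Nc (ℓ a : ℕ) : ℝ := ∑' h : Fin (ℓ+1) → ℕ, Fn ℓ a h
def Wc (ℓ a : ℕ) : ℝ := ∑' h : Fin (ℓ+1) → ℕ, Fw ℓ a h

lemma wt_nonneg {ℓ : ℕ} (h : Fin (ℓ+1) → ℕ) : 0 ≤ wt h :=
  Finset.sum_nonneg fun _ _ => by positivity

lemma Fn_nonneg (ℓ a : ℕ) (h : Fin (ℓ+1) → ℕ) : 0 ≤ Fn ℓ a h := by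
  rw [Fn]; split_ifs <;> norm_num

lemma Fw_nonneg (ℓ a : ℕ) (h : Fin (ℓ+1) → ℕ) : 0 ≤ Fw ℓ a h := by
  rw [Fw]; split_ifs <;> simp [wt_nonneg]

lemma height_bound {ℓ a : ℕ} {h : Fin (ℓ+1) → ℕ} (h0 : h 0 = a) (hs : StepOk h)
    (i : Fin (ℓ+1)) : h i ≤ a + ℓ := by
  have key : ∀ i : Fin (ℓ+1), h i ≤ a + i.1 := by
    intro i
    induction i using Fin.induction with
    | zero => simp [h0]
    | succ j ih =>
      have hv1 : (j.succ : Fin (ℓ+1)).1 = j.1 + 1 := rfl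
      have hv2 : (j.castSucc : Fin (ℓ+1)).1 = j.1 := rfl
      rcases hs j with H | H | H <;> omega
  exact le_trans (key i) (by omega)

lemma support_Fw_finite (ℓ a : ℕ) : (Function.support (Fw ℓ a)).Finite := by
  apply Set.Finite.subset (Set.Finite.pi (t := fun _ : Fin (ℓ+1) => Set.Iic (a+ℓ))
    (fun _ => Set.finite_Iic (a+ℓ)))
  intro h hh
  rw [Function.mem_support, Fw] at hh
  split_ifs at hh with hc
  · exact fun i _ => height_bound hc.1 hc.2.2.1 i
  · simp at hh

lemma support_Fn_finite (ℓ a : ℕ) : (Function.support (Fn ℓ a)).Finite := by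
  apply Set.Finite.subset (Set.Finite.pi (t := fun _ : Fin (ℓ+1) => Set.Iic (a+ℓ))
    (fun _ => Set.finite_Iic (a+ℓ)))
  intro h hh
  rw [Function.mem_support, Fn] at hh
  split_ifs at hh with hc
  · exact fun i _ => height_bound hc.1 hc.2.2.1 i
  · simp at hh

lemma summable_Fw (ℓ a : ℕ) : Summable (Fw ℓ a) :=
  summable_of_ne_finset_zero (s := (support_Fw_finite ℓ a).toFinset)
    (fun h hh => by simpa using fun c => hh ((support_Fw_finite ℓ a).mem_toFinset.2 c))

lemma summable_Fn (ℓ a : ℕ) : Summable (Fn ℓ a) :=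
  summable_of_ne_finset_zero (s := (support_Fn_finite ℓ a).toFinset)
    (fun h hh => by simpa using fun c => hh ((support_Fn_finite ℓ a).mem_toFinset.2 c))

lemma Nc_nonneg (ℓ a : ℕ) : 0 ≤ Nc ℓ a := tsum_nonneg (Fn_nonneg ℓ a)
lemma Wc_nonneg (ℓ a : ℕ) : 0 ≤ Wc ℓ a := tsum_nonneg (Fw_nonneg ℓ a)

variable {ℓ : ℕ}


lemma cons_last (a : ℕ) (h' : Fin (ℓ+1) → ℕ) :
    (Fin.cons a h' : Fin (ℓ+2) → ℕ) (Fin.last (ℓ+1)) = h' (Fin.last ℓ) := by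
  rw [← Fin.succ_last, Fin.cons_succ]

lemma stepOk_cons (a : ℕ) (h' : Fin (ℓ+1) → ℕ) :
    StepOk (Fin.cons a h' : Fin (ℓ+2) → ℕ) ↔
      (((h' 0 : ℤ) - (a : ℤ) = 1 ∨ (h' 0 : ℤ) - (a : ℤ) = -1 ∨ (h' 0 : ℤ) - (a : ℤ) = 0)
        ∧ StepOk h') := by
  constructor
  · intro H
    refine ⟨?_, fun j => ?_⟩
    · have := H 0
      simpa using this
    · have := H j.succ
      simpa [← Fin.succ_castSucc] using this
  · rintro ⟨H0, H⟩ i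
    induction i using Fin.cases with
    | zero => simpa using H0
    | succ j => simpa [← Fin.succ_castSucc] using H j

lemma flats_card_cons (a : ℕ) (h' : Fin (ℓ+1) → ℕ) :
    (flats (Fin.cons a h' : Fin (ℓ+2) → ℕ)).card
      = (if h' 0 = a then 1 else 0) + (flats h').card := by
  rw [flats, Finset.card_filter, Fin.sum_univ_succ, flats, Finset.card_filter]
  congr 1

lemma wt_cons (a : ℕ) (h' : Fin (ℓ+1) → ℕ) :
    wt (Fin.cons a h' : Fin (ℓ+2) → ℕ) = (if h' 0 = a then (a : ℝ) else 0) + wt h' := by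
  rw [wt, flats, Finset.sum_filter, Fin.sum_univ_succ, wt, flats, Finset.sum_filter]
  congr 1
  simp only [Fin.castSucc_zero, Fin.cons_zero, Fin.cons_succ]
  split_ifs with hc
  · rw [hc]
  · rfl

lemma wt_eq_zero {h' : Fin (ℓ+1) → ℕ} (hc : (flats h').card = 0) : wt h' = 0 := by
  rw [wt, Finset.card_eq_zero.mp hc, Finset.sum_empty]

lemma Fn_start {c : ℕ} {h' : Fin (ℓ+1) → ℕ} (hc : h' 0 ≠ c) : Fn ℓ c h' = 0 := by
  rw [Fn, if_neg]; rintro ⟨c', -⟩; exact hc c'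

lemma Fw_start {c : ℕ} {h' : Fin (ℓ+1) → ℕ} (hc : h' 0 ≠ c) : Fw ℓ c h' = 0 := by
  rw [Fw, if_neg]; rintro ⟨c', -⟩; exact hc c'

lemma Fn_cons (a b : ℕ) (h' : Fin (ℓ+1) → ℕ) :
    Fn (ℓ+1) a (Fin.cons b h') =
      if b = a then Fn ℓ (a+1) h' + (if a = 0 then 0 else Fn ℓ (a-1) h') else 0 := by
  by_cases hb : b = a
  case neg =>
    rw [if_neg hb, Fn, if_neg]
    rintro ⟨c, -⟩
    rw [Fin.cons_zero] at c
    exact hb c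
  subst hb
  rw [if_pos rfl]
  rw [show Fn (ℓ+1) b (Fin.cons b h')
      = if (h' (Fin.last ℓ) = 0
            ∧ (((h' 0 : ℤ) - (b:ℤ) = 1 ∨ (h' 0 : ℤ) - (b:ℤ) = -1 ∨ (h' 0 : ℤ) - (b:ℤ) = 0)
              ∧ StepOk h')
            ∧ ((if h' 0 = b then 1 else 0) + (flats h').card = 0)) then 1 else 0 from by
    rw [Fn]
    apply if_congr _ rfl rfl
    rw [stepOk_cons, flats_card_cons, cons_last, Fin.cons_zero]
    simp]
  by_cases h0 : h' 0 = b
  · rw [if_neg (by simp [h0]), Fn_start (by omega),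
      show (if b = 0 then (0:ℝ) else Fn ℓ (b-1) h') = 0 from by
        split_ifs with hb0
        · rfl
        · exact Fn_start (by omega)]
    norm_num
  by_cases h1 : h' 0 = b + 1
  · rw [show (if b = 0 then (0:ℝ) else Fn ℓ (b-1) h') = 0 from by
        split_ifs with hb0
        · rfl
        · exact Fn_start (by omega), add_zero, Fn]
    apply if_congr _ rfl rfl
    constructor
    · rintro ⟨hl, ⟨-, hS⟩, hcard⟩
      exact ⟨h1, hl, hS, by simpa [h0] using hcard⟩
    · rintro ⟨-, hl, hS, hcard⟩
      exact ⟨hl, ⟨by omega, hS⟩, by simpa [h0] using hcard⟩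
  by_cases h2 : 1 ≤ b ∧ h' 0 = b - 1
  · obtain ⟨hb1, hb2⟩ := h2
    rw [Fn_start (c := b+1) (by omega), zero_add, if_neg (show ¬ b = 0 by omega), Fn]
    apply if_congr _ rfl rfl
    constructor
    · rintro ⟨hl, ⟨-, hS⟩, hcard⟩
      exact ⟨hb2, hl, hS, by simpa [h0] using hcard⟩
    · rintro ⟨-, hl, hS, hcard⟩
      exact ⟨hl, ⟨by omega, hS⟩, by simpa [h0] using hcard⟩
  · rw [if_neg (by rintro ⟨-, ⟨hd, -⟩, -⟩; omega), Fn_start (c := b+1) (by omega),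
      show (if b = 0 then (0:ℝ) else Fn ℓ (b-1) h') = 0 from by
        split_ifs with hb0
        · rfl
        · exact Fn_start (by omega)]
    norm_num


lemma Fw_cons (a b : ℕ) (h' : Fin (ℓ+1) → ℕ) :
    Fw (ℓ+1) a (Fin.cons b h') =
      if b = a then
        (a : ℝ) * Fn ℓ a h' + Fw ℓ (a+1) h' + (if a = 0 then 0 else Fw ℓ (a-1) h')
      else 0 := by
  by_cases hb : b = a
  case neg =>
    rw [if_neg hb, Fw, if_neg]
    rintro ⟨c, -⟩
    rw [Fin.cons_zero] at c
    exact hb c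
  subst hb
  rw [if_pos rfl]
  rw [show Fw (ℓ+1) b (Fin.cons b h')
      = if (h' (Fin.last ℓ) = 0
            ∧ (((h' 0 : ℤ) - (b:ℤ) = 1 ∨ (h' 0 : ℤ) - (b:ℤ) = -1 ∨ (h' 0 : ℤ) - (b:ℤ) = 0)
              ∧ StepOk h')
            ∧ ((if h' 0 = b then 1 else 0) + (flats h').card = 1)) then
          ((if h' 0 = b then (b:ℝ) else 0) + wt h') else 0 from by
    rw [Fw]
    apply if_congr _ (wt_cons b h') rfl
    rw [stepOk_cons, flats_card_cons, cons_last, Fin.cons_zero]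
    simp]
  by_cases h0 : h' 0 = b
  · rw [Fw_start (c := b+1) (by omega),
      show (if b = 0 then (0:ℝ) else Fw ℓ (b-1) h') = 0 from by
        split_ifs with hb0
        · rfl
        · exact Fw_start (by omega),
      add_zero, add_zero, Fn, mul_ite, mul_one, mul_zero]
    simp only [h0, sub_self, eq_self_iff_true, if_true, true_and]
    by_cases hc : h' (Fin.last ℓ) = 0 ∧ StepOk h' ∧ (flats h').card = 0
    · rw [if_pos hc, if_pos ⟨hc.1, ⟨by simp, hc.2.1⟩, by omega⟩, wt_eq_zero hc.2.2, add_zero]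
    · rw [if_neg hc, if_neg]
      rintro ⟨c1, ⟨-, c2⟩, c3⟩
      exact hc ⟨c1, c2, by omega⟩
  by_cases h1 : h' 0 = b + 1
  · rw [show (if b = 0 then (0:ℝ) else Fw ℓ (b-1) h') = 0 from by
        split_ifs with hb0
        · rfl
        · exact Fw_start (by omega), add_zero,
      Fn_start (c := b) (by omega), mul_zero, zero_add, Fw]
    simp only [if_neg h0, zero_add]
    apply if_congr _ rfl rfl
    constructor
    · rintro ⟨hl, ⟨-, hS⟩, hcard⟩
      exact ⟨h1, hl, hS, hcard⟩
    · rintro ⟨-, hl, hS, hcard⟩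
      exact ⟨hl, ⟨by omega, hS⟩, hcard⟩
  by_cases h2 : 1 ≤ b ∧ h' 0 = b - 1
  · obtain ⟨hb1, hb2⟩ := h2
    rw [Fw_start (c := b+1) (by omega), add_zero, Fn_start (c := b) (by omega), mul_zero,
      zero_add, if_neg (show ¬ b = 0 by omega), Fw]
    simp only [if_neg h0, zero_add]
    apply if_congr _ rfl rfl
    constructor
    · rintro ⟨hl, ⟨-, hS⟩, hcard⟩
      exact ⟨hb2, hl, hS, hcard⟩
    · rintro ⟨-, hl, hS, hcard⟩
      exact ⟨hl, ⟨by omega, hS⟩, hcard⟩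
  · rw [if_neg (by rintro ⟨-, ⟨hd, -⟩, -⟩; omega), Fw_start (c := b+1) (by omega), add_zero,
      Fn_start (c := b) (by omega), mul_zero, zero_add,
      show (if b = 0 then (0:ℝ) else Fw ℓ (b-1) h') = 0 from by
        split_ifs with hb0
        · rfl
        · exact Fw_start (by omega)]

lemma tsum_decomp (F : (Fin (ℓ+2) → ℕ) → ℝ) (hF : Summable F)
    (G : (Fin (ℓ+1) → ℕ) → ℝ) (a : ℕ)
    (hpt : ∀ b h', F (Fin.cons b h') = if b = a then G h' else 0) :
    ∑' h, F h = ∑' h', G h' := by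
  rw [← (Fin.consEquiv fun _ : Fin (ℓ+2) => ℕ).tsum_eq F]
  have hsum : Summable fun p : ℕ × (Fin (ℓ+1) → ℕ) => F (Fin.cons p.1 p.2) :=
    (Fin.consEquiv fun _ : Fin (ℓ+2) => ℕ).summable_iff.2 hF
  have step : ∑' (p : ℕ × (Fin (ℓ+1) → ℕ)), F (Fin.cons p.1 p.2)
      = ∑' (b : ℕ) (h' : Fin (ℓ+1) → ℕ), F (Fin.cons b h') :=
    Summable.tsum_prod' hsum fun b => hsum.prod_factor b
  calc ∑' (p : ℕ × (Fin (ℓ+1) → ℕ)), F ((Fin.consEquiv fun _ : Fin (ℓ+2) => ℕ) p)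
      = ∑' (b : ℕ) (h' : Fin (ℓ+1) → ℕ), F (Fin.cons b h') := step
    _ = ∑' (b : ℕ), (if b = a then ∑' h' : Fin (ℓ+1) → ℕ, G h' else 0) := by
        apply tsum_congr; intro b
        by_cases hb : b = a
        · subst hb
          rw [if_pos rfl]
          exact tsum_congr fun h' => by rw [hpt, if_pos rfl]
        · rw [if_neg hb]
          have : ∀ h' : Fin (ℓ+1) → ℕ, F (Fin.cons b h') = 0 := fun h' => by
            rw [hpt, if_neg hb]
          simp [this]
    _ = ∑' h' : Fin (ℓ+1) → ℕ, G h' := tsum_ite_eq a _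

lemma Nc_succ (a : ℕ) :
    Nc (ℓ+1) a = Nc ℓ (a+1) + (if a = 0 then 0 else Nc ℓ (a-1)) := by
  rw [Nc, tsum_decomp (Fn (ℓ+1) a) (summable_Fn (ℓ+1) a)
      (fun h' => Fn ℓ (a+1) h' + (if a = 0 then 0 else Fn ℓ (a-1) h')) a
      (fun b h' => by rw [Fn_cons])]
  by_cases ha : a = 0
  · simp only [ha, if_true, eq_self_iff_true]
    rw [Summable.tsum_add (summable_Fn ℓ 1) (by simpa using summable_zero)]
    simp [Nc]
  · simp only [if_neg ha]
    rw [Summable.tsum_add (summable_Fn ℓ (a+1)) (summable_Fn ℓ (a-1))]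
    rfl

lemma Wc_succ (a : ℕ) :
    Wc (ℓ+1) a = a * Nc ℓ a + Wc ℓ (a+1) + (if a = 0 then 0 else Wc ℓ (a-1)) := by
  rw [Wc, tsum_decomp (Fw (ℓ+1) a) (summable_Fw (ℓ+1) a)
      (fun h' => (a:ℝ) * Fn ℓ a h' + Fw ℓ (a+1) h' + (if a = 0 then 0 else Fw ℓ (a-1) h')) a
      (fun b h' => by rw [Fw_cons])]
  by_cases ha : a = 0
  · simp only [ha, if_true, eq_self_iff_true]
    rw [Summable.tsum_add (((summable_Fn ℓ 0).mul_left _).add (summable_Fw ℓ 1)) (by simpa using summable_zero),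
      Summable.tsum_add ((summable_Fn ℓ 0).mul_left _) (summable_Fw ℓ 1), tsum_mul_left]
    simp [Nc, Wc]
  · simp only [if_neg ha]
    rw [Summable.tsum_add (((summable_Fn ℓ a).mul_left _).add (summable_Fw ℓ (a+1))) (summable_Fw ℓ (a-1)),
      Summable.tsum_add ((summable_Fn ℓ a).mul_left _) (summable_Fw ℓ (a+1)), tsum_mul_left]
    rfl

lemma Nc_zero (a : ℕ) : Nc 0 a = if a = 0 then 1 else 0 := by
  have h1 : ∀ h : Fin 1 → ℕ, Fn 0 a h = if (h = (fun _ => a) ∧ a = 0) then 1 else 0 := by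
    intro h
    rw [Fn]
    apply if_congr _ rfl rfl
    constructor
    · rintro ⟨ha, h0, -, -⟩
      have hc : h = fun _ => a := funext fun i => by rw [Subsingleton.elim i 0, ha]
      refine ⟨hc, ?_⟩
      rw [← ha]
      exact h0
    · rintro ⟨hc, ha⟩
      subst hc
      exact ⟨rfl, ha, fun i => i.elim0, by simp [flats]⟩
  by_cases ha : a = 0
  · rw [if_pos ha, Nc]
    calc ∑' h : Fin 1 → ℕ, Fn 0 a h
        = ∑' h : Fin 1 → ℕ, (if h = (fun _ => a) then (1:ℝ) else 0) := by
          apply tsum_congr; intro h; rw [h1]; simp [ha]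
      _ = 1 := tsum_ite_eq _ _
  · rw [if_neg ha, Nc]
    have : ∀ h : Fin 1 → ℕ, Fn 0 a h = 0 := fun h => by rw [h1]; simp [ha]
    simp [this]

lemma Wc_zero (a : ℕ) : Wc 0 a = 0 := by
  have : ∀ h : Fin 1 → ℕ, Fw 0 a h = 0 := by
    intro h
    rw [Fw, if_neg]
    rintro ⟨-, -, -, hcard⟩
    simp [flats] at hcard
  simp [Wc, this]

lemma Mcount_eq (ℓ : ℕ) : Mcount ℓ = Wc ℓ 0 := by
  have h1 : Mcount ℓ = ∑ᶠ h : {h : Fin (ℓ+1) → ℕ //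
      h 0 = 0 ∧ h (Fin.last ℓ) = 0 ∧ StepOk h ∧ (flats h).card = 1}, wt h.1 := rfl
  rw [h1]
  set P : Set (Fin (ℓ+1) → ℕ) :=
    {h | h 0 = 0 ∧ h (Fin.last ℓ) = 0 ∧ StepOk h ∧ (flats h).card = 1} with hP
  have hfin : P.Finite := by
    apply Set.Finite.subset (Set.Finite.pi (t := fun _ : Fin (ℓ+1) => Set.Iic (0+ℓ))
      (fun _ => Set.finite_Iic (0+ℓ)))
    rintro h ⟨h0, -, hS, -⟩
    exact fun i _ => height_bound h0 hS i
  have : Finite P := hfin.to_subtype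
  have := Fintype.ofFinite P
  have h2 : (∑ᶠ h : P, wt h.1) = ∑ h : P, wt h.1 := finsum_eq_sum_of_fintype _
  have h3 : (∑ h : P, wt h.1) = ∑' h : P, wt h.1 := (tsum_fintype _).symm
  have h4 : (∑' h : P, wt h.1) = ∑' h, P.indicator wt h := tsum_subtype P wt
  have h5 : ∀ h, P.indicator wt h = Fw ℓ 0 h := by
    intro h
    rw [Set.indicator_apply, Fw]
    congr 1
  calc (∑ᶠ h : P, wt h.1) = ∑' h, P.indicator wt h := by rw [h2, h3, h4]
    _ = Wc ℓ 0 := by rw [Wc]; exact tsum_congr h5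

lemma Nc_vanish : ∀ ℓ a : ℕ, ℓ < a → Nc ℓ a = 0 := by
  intro ℓ
  induction ℓ with
  | zero => intro a ha; rw [Nc_zero, if_neg (by omega)]
  | succ n ih =>
    intro a ha
    rw [Nc_succ, ih (a+1) (by omega), if_neg (by omega), ih (a-1) (by omega), add_zero]

lemma Nc_le (ℓ : ℕ) : ∀ a, Nc ℓ a ≤ 2^ℓ := by
  induction ℓ with
  | zero => intro a; rw [Nc_zero]; split_ifs <;> norm_num
  | succ n ih =>
    intro a
    rw [Nc_succ]
    have h3 : (if a = 0 then (0:ℝ) else Nc n (a-1)) ≤ 2^n := by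
      split_ifs with h
      · positivity
      · exact ih (a-1)
    calc Nc n (a+1) + (if a = 0 then (0:ℝ) else Nc n (a-1)) ≤ 2^n + 2^n :=
          add_le_add (ih (a+1)) h3
      _ = 2^(n+1) := by ring

lemma Wc_le (ℓ : ℕ) : ∀ a, Wc ℓ a ≤ (ℓ:ℝ)^2 * 2^ℓ := by
  induction ℓ with
  | zero => intro a; rw [Wc_zero]; norm_num
  | succ n ih =>
    intro a
    rw [Wc_succ]
    have hN : (a:ℝ) * Nc n a ≤ (n:ℝ) * 2^n := by
      by_cases hc : a ≤ n
      · exact mul_le_mul (by exact_mod_cast hc) (Nc_le n a) (Nc_nonneg n a) (by positivity)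
      · rw [Nc_vanish n a (by omega), mul_zero]; positivity
    have h3 : (if a = 0 then (0:ℝ) else Wc n (a-1)) ≤ (n:ℝ)^2 * 2^n := by
      split_ifs with h
      · positivity
      · exact ih (a-1)
    have h2n : (0:ℝ) < 2^n := by positivity
    have hcast : (0:ℝ) ≤ (n:ℝ) := Nat.cast_nonneg n
    calc (a:ℝ) * Nc n a + Wc n (a+1) + (if a = 0 then (0:ℝ) else Wc n (a-1))
        ≤ (n:ℝ) * 2^n + (n:ℝ)^2 * 2^n + (n:ℝ)^2 * 2^n := by
          exact add_le_add (add_le_add hN (ih (a+1))) h3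
      _ ≤ ((n:ℝ)+1)^2 * 2^(n+1) := by
          rw [show ((n:ℝ)+1)^2 * 2^(n+1) = (((n:ℝ)+1)^2*2) * 2^n from by ring]
          have key : (n:ℝ) + (n:ℝ)^2 + (n:ℝ)^2 ≤ ((n:ℝ)+1)^2*2 := by nlinarith
          nlinarith [mul_le_mul_of_nonneg_right key h2n.le]
      _ = ((n+1:ℕ):ℝ)^2 * 2^(n+1) := by push_cast; ring

lemma key_lin {u s S M : ℝ} (hs : 0 < s) (hsS : s * S = 1) (husS : u = s + S) (hS1 : 1 < S)
    (f : ℕ → ℝ) (hb : ∀ a, |f a| ≤ M) (hrec : ∀ a, f (a+2) = u * f (a+1) - f a) :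
    ∀ a, f a = f 0 * s ^ a := by
  have hS0 : (0:ℝ) < S := lt_trans one_pos hS1
  have hcS : ∀ a, f (a+1) - s * f a = (f 1 - s * f 0) * S ^ a := by
    intro a
    induction a with
    | zero => simp
    | succ n ih =>
      have h1 : f (n+2) - s * f (n+1) = S * (f (n+1) - s * f n) := by
        rw [hrec n, husS]
        linear_combination (f n) * hsS
      rw [show n+1+1 = n+2 from rfl, h1, ih]; ring
  have hc0 : f 1 - s * f 0 = 0 := by
    by_contra hne
    have h0 : 0 < |f 1 - s * f 0| := abs_pos.2 hne
    obtain ⟨n, hn⟩ := pow_unbounded_of_one_lt ((M + s * M) / |f 1 - s * f 0|) hS1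
    have habs : |f 1 - s * f 0| * S ^ n ≤ M + s * M := by
      calc |f 1 - s * f 0| * S ^ n = |(f 1 - s * f 0) * S ^ n| := by
            rw [abs_mul, abs_of_nonneg (pow_nonneg hS0.le n)]
        _ = |f (n+1) - s * f n| := by rw [hcS n]
        _ ≤ |f (n+1)| + |s * f n| := abs_sub _ _
        _ = |f (n+1)| + s * |f n| := by rw [abs_mul, abs_of_pos hs]
        _ ≤ M + s * M := add_le_add (hb _) (mul_le_mul_of_nonneg_left (hb _) hs.le)
    rw [div_lt_iff₀ h0] at hn
    nlinarith
  intro a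
  induction a with
  | zero => simp
  | succ n ih =>
    have h2 : f (n+1) - s * f n = 0 := by rw [hcS, hc0, zero_mul]
    have h3 : f (n+1) = s * f n := by linarith
    rw [h3, ih]; ring

def gg (u : ℝ) (a : ℕ) : ℝ := ∑' ℓ : ℕ, Nc ℓ a / u ^ ℓ
def ww (u : ℝ) (a : ℕ) : ℝ := ∑' ℓ : ℕ, Wc ℓ a / u ^ ℓ

variable {u : ℝ}

lemma summable_geom2 (hu : 2 < u) : Summable (fun ℓ : ℕ => (2/u)^ℓ) := by
  have hu0 : (0:ℝ) < u := by linarith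
  exact summable_geometric_of_lt_one (by positivity) (by rw [div_lt_one hu0]; linarith)

lemma summable_geom2' (hu : 2 < u) : Summable (fun ℓ : ℕ => (ℓ:ℝ)^2 * (2/u)^ℓ) := by
  have hu0 : (0:ℝ) < u := by linarith
  exact summable_pow_mul_geometric_of_norm_lt_one 2
    (by rw [Real.norm_eq_abs, abs_of_pos (by positivity), div_lt_one hu0]; linarith)

lemma summable_Ncu (hu : 2 < u) (a : ℕ) : Summable (fun ℓ : ℕ => Nc ℓ a / u ^ ℓ) := by
  have hu0 : (0:ℝ) < u := by linarith
  apply Summable.of_nonneg_of_le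
    (fun ℓ => div_nonneg (Nc_nonneg ℓ a) (by positivity)) (fun ℓ => ?_) (summable_geom2 hu)
  rw [div_pow]
  gcongr
  exact Nc_le ℓ a

lemma summable_Wcu (hu : 2 < u) (a : ℕ) : Summable (fun ℓ : ℕ => Wc ℓ a / u ^ ℓ) := by
  have hu0 : (0:ℝ) < u := by linarith
  apply Summable.of_nonneg_of_le
    (fun ℓ => div_nonneg (Wc_nonneg ℓ a) (by positivity)) (fun ℓ => ?_) (summable_geom2' hu)
  rw [div_pow, ← mul_div_assoc]
  gcongr
  exact Wc_le ℓ a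

lemma gg_nonneg (hu : 2 < u) (a : ℕ) : 0 ≤ gg u a :=
  tsum_nonneg fun ℓ => div_nonneg (Nc_nonneg ℓ a) (by positivity)

lemma ww_nonneg (hu : 2 < u) (a : ℕ) : 0 ≤ ww u a :=
  tsum_nonneg fun ℓ => div_nonneg (Wc_nonneg ℓ a) (by positivity)

lemma gg_bdd (hu : 2 < u) : ∃ M, ∀ a, |gg u a| ≤ M := by
  have hu0 : (0:ℝ) < u := by linarith
  refine ⟨∑' ℓ : ℕ, (2/u)^ℓ, fun a => ?_⟩
  rw [abs_of_nonneg (gg_nonneg hu a)]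
  apply Summable.tsum_le_tsum _ (summable_Ncu hu a) (summable_geom2 hu)
  intro ℓ
  rw [div_pow]
  gcongr
  exact Nc_le ℓ a

lemma ww_bdd (hu : 2 < u) : ∃ M, ∀ a, |ww u a| ≤ M := by
  have hu0 : (0:ℝ) < u := by linarith
  refine ⟨∑' ℓ : ℕ, (ℓ:ℝ)^2 * (2/u)^ℓ, fun a => ?_⟩
  rw [abs_of_nonneg (ww_nonneg hu a)]
  apply Summable.tsum_le_tsum _ (summable_Wcu hu a) (summable_geom2' hu)
  intro ℓ
  rw [div_pow, ← mul_div_assoc]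
  gcongr
  exact Wc_le ℓ a

lemma gg_rec0 (hu : 2 < u) : gg u 0 = 1 + u⁻¹ * gg u 1 := by
  have hu0 : (0:ℝ) < u := by linarith
  have h := Summable.tsum_eq_zero_add (summable_Ncu hu 0)
  have hpt : ∀ ℓ : ℕ, Nc (ℓ+1) 0 / u^(ℓ+1) = u⁻¹ * (Nc ℓ 1 / u^ℓ) := by
    intro ℓ
    rw [Nc_succ, if_pos rfl, add_zero, pow_succ]
    ring
  calc gg u 0 = Nc 0 0 / u^0 + ∑' ℓ : ℕ, Nc (ℓ+1) 0 / u^(ℓ+1) := h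
    _ = 1 + ∑' ℓ : ℕ, u⁻¹ * (Nc ℓ 1 / u^ℓ) := by
        rw [Nc_zero, if_pos rfl]
        norm_num
        exact tsum_congr hpt
    _ = 1 + u⁻¹ * gg u 1 := by rw [tsum_mul_left, gg]

lemma gg_rec_pos (hu : 2 < u) (a : ℕ) :
    gg u (a+1) = u⁻¹ * (gg u (a+2) + gg u a) := by
  have hu0 : (0:ℝ) < u := by linarith
  have h := Summable.tsum_eq_zero_add (summable_Ncu hu (a+1))
  have hpt : ∀ ℓ : ℕ, Nc (ℓ+1) (a+1) / u^(ℓ+1)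
      = u⁻¹ * (Nc ℓ (a+2) / u^ℓ) + u⁻¹ * (Nc ℓ a / u^ℓ) := by
    intro ℓ
    rw [Nc_succ, if_neg (by omega), pow_succ]
    have : a + 1 - 1 = a := by omega
    rw [this]
    ring
  calc gg u (a+1) = Nc 0 (a+1) / u^0 + ∑' ℓ : ℕ, Nc (ℓ+1) (a+1) / u^(ℓ+1) := h
    _ = 0 + ∑' ℓ : ℕ, (u⁻¹ * (Nc ℓ (a+2) / u^ℓ) + u⁻¹ * (Nc ℓ a / u^ℓ)) := by
        rw [Nc_zero, if_neg (by omega)]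
        norm_num
        exact tsum_congr hpt
    _ = u⁻¹ * (gg u (a+2) + gg u a) := by
        rw [zero_add, Summable.tsum_add ((summable_Ncu hu (a+2)).mul_left _)
          ((summable_Ncu hu a).mul_left _), tsum_mul_left, tsum_mul_left, gg, gg]
        ring

lemma ww_rec0 (hu : 2 < u) : ww u 0 = u⁻¹ * ww u 1 := by
  have hu0 : (0:ℝ) < u := by linarith
  have h := Summable.tsum_eq_zero_add (summable_Wcu hu 0)
  have hpt : ∀ ℓ : ℕ, Wc (ℓ+1) 0 / u^(ℓ+1) = u⁻¹ * (Wc ℓ 1 / u^ℓ) := by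
    intro ℓ
    rw [Wc_succ, if_pos rfl, add_zero, Nat.cast_zero, zero_mul, zero_add, pow_succ]
    ring
  calc ww u 0 = Wc 0 0 / u^0 + ∑' ℓ : ℕ, Wc (ℓ+1) 0 / u^(ℓ+1) := h
    _ = 0 + ∑' ℓ : ℕ, u⁻¹ * (Wc ℓ 1 / u^ℓ) := by
        rw [Wc_zero]
        norm_num
        exact tsum_congr hpt
    _ = u⁻¹ * ww u 1 := by rw [zero_add, tsum_mul_left, ww]

lemma ww_rec_pos (hu : 2 < u) (a : ℕ) :
    ww u (a+1) = u⁻¹ * (((a:ℝ)+1) * gg u (a+1) + ww u (a+2) + ww u a) := by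
  have hu0 : (0:ℝ) < u := by linarith
  have h := Summable.tsum_eq_zero_add (summable_Wcu hu (a+1))
  have hpt : ∀ ℓ : ℕ, Wc (ℓ+1) (a+1) / u^(ℓ+1)
      = u⁻¹ * (((a:ℝ)+1) * (Nc ℓ (a+1) / u^ℓ)) + u⁻¹ * (Wc ℓ (a+2) / u^ℓ)
        + u⁻¹ * (Wc ℓ a / u^ℓ) := by
    intro ℓ
    rw [Wc_succ, if_neg (by omega), pow_succ]
    have h1 : a + 1 - 1 = a := by omega
    rw [h1]
    push_cast
    ring
  calc ww u (a+1) = Wc 0 (a+1) / u^0 + ∑' ℓ : ℕ, Wc (ℓ+1) (a+1) / u^(ℓ+1) := h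
    _ = 0 + ∑' ℓ : ℕ, (u⁻¹ * (((a:ℝ)+1) * (Nc ℓ (a+1) / u^ℓ)) + u⁻¹ * (Wc ℓ (a+2) / u^ℓ)
        + u⁻¹ * (Wc ℓ a / u^ℓ)) := by
        rw [Wc_zero]
        norm_num
        exact tsum_congr hpt
    _ = u⁻¹ * (((a:ℝ)+1) * gg u (a+1) + ww u (a+2) + ww u a) := by
        rw [zero_add,
          Summable.tsum_add ((((summable_Ncu hu (a+1)).mul_left _).mul_left _).add
            ((summable_Wcu hu (a+2)).mul_left _)) ((summable_Wcu hu a).mul_left _),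
          Summable.tsum_add (((summable_Ncu hu (a+1)).mul_left _).mul_left _)
            ((summable_Wcu hu (a+2)).mul_left _),
          tsum_mul_left, tsum_mul_left, tsum_mul_left, tsum_mul_left, gg, ww, ww]
        ring

lemma ww_zero_eq (hu : 2 < u) :
    ww u 0 = u * ((u - Real.sqrt (u^2-4))/2)^2 / (u^2-4) := by
  have hu0 : (0:ℝ) < u := by linarith
  have hu4 : (0:ℝ) < u^2 - 4 := by nlinarith
  set D := Real.sqrt (u^2-4) with hD_def
  have hD2 : D^2 = u^2 - 4 := Real.sq_sqrt hu4.le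
  have hD0 : 0 < D := Real.sqrt_pos.2 hu4
  have hDu : D < u := by nlinarith
  set s := (u - D)/2 with hs_def
  set S := (u + D)/2 with hS_def
  have hs0 : 0 < s := by rw [hs_def]; linarith
  have hS1 : 1 < S := by rw [hS_def]; linarith
  have hsS : s * S = 1 := by rw [hs_def, hS_def]; nlinarith
  have husS : u = s + S := by rw [hs_def, hS_def]; ring
  clear_value D s S
  have hs2 : s^2 = u*s - 1 := by linear_combination (-s) * husS - hsS
  have hS2u : u * S - 1 = S^2 := by linear_combination S * husS + hsS
  have hs1 : s < 1 := by nlinarith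
  -- solve for gg
  obtain ⟨Mg, hMg⟩ := gg_bdd hu
  have hgrec : ∀ a : ℕ, gg u (a+3) = u * gg u (a+2) - gg u (a+1) := by
    intro a
    have h := gg_rec_pos hu (a+1)
    rw [h, ← mul_assoc, mul_inv_cancel₀ hu0.ne', one_mul]
    ring
  have hkey := key_lin hs0 hsS husS hS1 (fun a => gg u (a+1)) (fun a => hMg (a+1))
      (fun a => hgrec a)
  have hgg2 : gg u 2 = gg u 1 * s := by
    have := hkey 1
    simpa using this
  have e1 : gg u 2 = u * gg u 1 - gg u 0 := by
    have h := gg_rec_pos hu 0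
    rw [h, ← mul_assoc, mul_inv_cancel₀ hu0.ne', one_mul]
    ring
  have e0 : gg u 0 = 1 + u⁻¹ * gg u 1 := gg_rec0 hu
  have h5 : gg u 0 = S * gg u 1 := by
    linear_combination e1 - hgg2 + gg u 1 * husS
  have h6 : (u * S - 1) * gg u 1 = u := by
    have h7 : S * gg u 1 = 1 + u⁻¹ * gg u 1 := by rw [← h5]; exact e0
    have h8 : u * (S * gg u 1) = u * (1 + u⁻¹ * gg u 1) := by rw [h7]
    have h9 : u * (1 + u⁻¹ * gg u 1) = u + gg u 1 := by
      field_simp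
    linear_combination h8 + h9
  rw [hS2u] at h6
  have h7 : s^2 * S^2 = 1 := by nlinarith
  have hg1 : gg u 1 = u * s^2 := by
    calc gg u 1 = (s^2 * S^2) * gg u 1 := by rw [h7, one_mul]
      _ = s^2 * (S^2 * gg u 1) := by ring
      _ = u * s^2 := by rw [h6]; ring
  have hg : ∀ a : ℕ, gg u (a+1) = u * s^2 * s^a := by
    intro a
    have this : gg u (a+1) = gg u 1 * s^a := hkey a
    rw [this, hg1]
  -- candidate for ww (scaled by 2*(u-2s)^2)
  set p : ℝ → ℝ := fun x => u*s*(u-2*s)*x^2 + u^2*s*x + 2*u*s^3*(u-s) with hp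
  set cd : ℕ → ℝ := fun a => p a * s^a with hcd
  have hidq : ∀ a : ℕ, cd (a+2)
      = u * cd (a+1) - cd a - ((a:ℝ)+1) * (2*(u-2*s)^2*u) * s^(a+2) := by
    intro a
    simp only [hcd, hp]
    push_cast
    linear_combination (s^a * (-2*u*s^4 + 2*u^2*s^3 - 2*u*(a:ℝ)^2*s^2
      + u^2*(a:ℝ)^2*s + u^2*(a:ℝ)*s)) * hs2
  have hid0 : u * cd 0 = cd 1 := by
    simp only [hcd, hp]
    push_cast
    linear_combination (2*u*s^3 - 2*u^2*s^2) * hs2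
  -- cd is bounded
  have hcd_tend : Filter.Tendsto cd Filter.atTop (nhds 0) := by
    have hnorm : ‖s‖ < 1 := by rw [Real.norm_eq_abs, abs_of_pos hs0]; exact hs1
    have t2 := (summable_pow_mul_geometric_of_norm_lt_one 2 hnorm).tendsto_atTop_zero
    have t1 := (summable_pow_mul_geometric_of_norm_lt_one 1 hnorm).tendsto_atTop_zero
    have t0 := (summable_geometric_of_lt_one hs0.le hs1).tendsto_atTop_zero
    have hfun : cd = fun a : ℕ => (u*s*(u-2*s)) * ((a:ℝ)^2 * s^a)
        + (u^2*s) * ((a:ℝ)^1 * s^a) + (2*u*s^3*(u-s)) * s^a := by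
      funext a; simp only [hcd, hp]; ring
    rw [hfun]
    have := (((t2.const_mul (u*s*(u-2*s))).add (t1.const_mul (u^2*s))).add
      (t0.const_mul (2*u*s^3*(u-s))))
    simpa using this
  obtain ⟨Mc, hMc0⟩ := (hcd_tend.abs).bddAbove_range
  have hMc : ∀ a, |cd a| ≤ Mc := fun a => hMc0 ⟨a, rfl⟩
  obtain ⟨Mw, hMw⟩ := ww_bdd hu
  -- f := 2*(u-2s)^2 * ww(·+1) - cd(·+1)
  set f : ℕ → ℝ := fun a => 2*(u-2*s)^2 * ww u (a+1) - cd (a+1) with hf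
  have hfb : ∀ a, |f a| ≤ 2*(u-2*s)^2 * Mw + Mc := by
    intro a
    have t1 : |2*(u-2*s)^2 * ww u (a+1)| ≤ 2*(u-2*s)^2 * Mw := by
      rw [abs_mul]
      have : |2*(u-2*s)^2| = 2*(u-2*s)^2 := abs_of_nonneg (by positivity)
      rw [this]
      exact mul_le_mul_of_nonneg_left (hMw _) (by positivity)
    calc |f a| ≤ |2*(u-2*s)^2 * ww u (a+1)| + |cd (a+1)| := abs_sub _ _
      _ ≤ 2*(u-2*s)^2 * Mw + Mc := add_le_add t1 (hMc _)
  have hwrec : ∀ a : ℕ, ww u (a+3)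
      = u * ww u (a+2) - ww u (a+1) - ((a:ℝ)+2) * (u * s^2 * s^(a+1)) := by
    intro a
    have h := ww_rec_pos hu (a+1)
    rw [hg (a+1)] at h
    rw [h, ← mul_assoc, mul_inv_cancel₀ hu0.ne', one_mul]
    push_cast
    ring
  have hfrec : ∀ a, f (a+2) = u * f (a+1) - f a := by
    intro a
    simp only [hf]
    have h1 := hwrec a
    have h2 := hidq (a+1)
    push_cast at h2
    rw [show a+1+2 = a+3 from rfl, show a+1+1 = a+2 from rfl] at h2
    rw [show a+2+1 = a+3 from rfl, h1, h2]
    ring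
  have hfsol := key_lin hs0 hsS husS hS1 f hfb hfrec
  -- extra relations
  have r1 : u * ww u 1 = u * s^2 + ww u 2 + ww u 0 := by
    have h := ww_rec_pos hu 0
    rw [hg 0] at h
    rw [h, ← mul_assoc, mul_inv_cancel₀ hu0.ne', one_mul]
    push_cast
    ring
  have r0 : u * ww u 0 = ww u 1 := by
    have h := ww_rec0 hu
    rw [h, ← mul_assoc, mul_inv_cancel₀ hu0.ne', one_mul]
  -- derive f 0 = 0
  have hf1 : f 1 = f 0 * s := by
    have := hfsol 1
    simpa using this
  have he0 : u * f 0 = f 1 + (2*(u-2*s)^2 * ww u 0 - cd 0) := by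
    have h2 := hidq 0
    simp only [hf]
    push_cast at h2 ⊢
    linear_combination 2*(u-2*s)^2 * r1 + h2
  have he1 : 2*(u-2*s)^2 * ww u 0 - cd 0 = u⁻¹ * f 0 := by
    simp only [hf]
    have : cd 0 = u⁻¹ * cd 1 := by
      rw [← hid0, ← mul_assoc, inv_mul_cancel₀ hu0.ne', one_mul]
    rw [this]
    have h3 : ww u 0 = u⁻¹ * ww u 1 := by
      rw [← r0, ← mul_assoc, inv_mul_cancel₀ hu0.ne', one_mul]
    rw [h3]
    ring
  have hf0 : f 0 = 0 := by
    have hcomb : u * f 0 = f 0 * s + u⁻¹ * f 0 := by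
      rw [he0, hf1, he1]
    have hSmall : u⁻¹ < 1 := by
      rw [inv_lt_one_iff₀]
      right; linarith
    have hqq : (u - s - u⁻¹) * f 0 = 0 := by linear_combination hcomb
    have hpos : 0 < u - s - u⁻¹ := by
      have : u - s = S := by linarith [husS]
      rw [this]
      linarith
    exact (mul_eq_zero.1 hqq).resolve_left hpos.ne'
  have hface : 2*(u-2*s)^2 * ww u 0 - cd 0 = 0 := by rw [he1, hf0, mul_zero]
  have hcd0 : cd 0 = 2*u*s^3*(u-s) := by simp [hcd, hp]
  have hD2s : (u-2*s)^2 = u^2-4 := by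
    have h9 : u - 2*s = D := by rw [hs_def]; ring
    rw [h9, hD2]
  have hA : 2*(u-2*s)^2 * ww u 0 = 2*u*s^3*(u-s) := by linarith [hface, hcd0]
  rw [hD2s] at hA
  have hsu : s*(u-s) = 1 := by linear_combination hsS + s * husS
  rw [eq_div_iff (ne_of_gt hu4)]
  linear_combination (1/2)*hA + u*s^2*hsu
end MotzkinAux
end AuxGF

/-- For every real u > 2, the series Σ_{ℓ≥0} M₁(ℓ)·u^{−ℓ−1} converges and
equals S₋(u)²/(u²−4), where S₋(u) = (u − √(u²−4))/2. -/
theorem weighted_motzkin_one_slide_generating_function (u : ℝ) (hu : 2 < u) :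
    HasSum (fun ℓ : ℕ => Mcount ℓ / u ^ (ℓ + 1))
      (((u - Real.sqrt (u ^ 2 - 4)) / 2) ^ 2 / (u ^ 2 - 4)) := by
  have hu0 : (0:ℝ) < u := by linarith
  have hu4 : (0:ℝ) < u^2 - 4 := by nlinarith
  have key : HasSum (fun ℓ : ℕ => MotzkinAux.Wc ℓ 0 / u^ℓ) (MotzkinAux.ww u 0) :=
    (MotzkinAux.summable_Wcu hu 0).hasSum
  have key2 := key.mul_right u⁻¹
  have hfun : (fun ℓ : ℕ => Mcount ℓ / u ^ (ℓ+1))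
      = fun ℓ : ℕ => MotzkinAux.Wc ℓ 0 / u^ℓ * u⁻¹ := by
    funext ℓ
    rw [MotzkinAux.Mcount_eq, pow_succ, ← div_div, div_eq_mul_inv]
  rw [hfun]
  rw [show ((u - Real.sqrt (u ^ 2 - 4)) / 2) ^ 2 / (u ^ 2 - 4) = MotzkinAux.ww u 0 * u⁻¹ from ?_]
  · exact key2
  rw [MotzkinAux.ww_zero_eq hu]
  field_simp
end
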